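/- arXiv:1711.07028 — 5 statements merged into one kernel-verified Lean document; each statement's English description precedes it below -/
import Mathlib

section
/- The set E = {(λ, 2λ) : λ ∈ ℤ≥0} ∪ {(2λ, λ) : λ ∈ ℤ≥0} ⊆ ℝ² cannot be written in the form ⋃_{i=1}^k P_i + intcone{r¹,…,rᵗ}, where each P_i is a polytope in ℝ² and intcone{r¹,…,rᵗ} denotes the set of nonnegative integer combinations of finitely many integer vectors r¹,…,rᵗ ∈ ℤ². In particular (by the Jeroslow–Lowe theorem), E is not MILP-representable. -/
open Pointwise

/-- A set S ⊆ ℝⁿ is MILP-representable if it is the projection onto the x-variables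
of a mixed-integer linear set {(x,y,z) ∈ ℝⁿ × ℝᵖ × ℤ^q : Bx + Cy + Dz ≥ b}
with rational matrices B, C, D. -/
def MILPRep (n : ℕ) (S : Set (Fin n → ℝ)) : Prop :=
  ∃ (p q m : ℕ) (B : Matrix (Fin m) (Fin n) ℚ) (C : Matrix (Fin m) (Fin p) ℚ)
    (D : Matrix (Fin m) (Fin q) ℚ) (b : Fin m → ℝ),
    S = {x | ∃ (y : Fin p → ℝ) (z : Fin q → ℤ), ∀ i,
      b i ≤ (∑ j, (B i j : ℝ) * x j) + (∑ j, (C i j : ℝ) * y j)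
          + (∑ j, (D i j : ℝ) * (z j : ℝ))}

/-- The set E = {(λ,2λ) : λ ∈ ℤ≥0} ∪ {(2λ,λ) : λ ∈ ℤ≥0} ⊆ ℝ². -/
def Eset : Set (Fin 2 → ℝ) :=
  {x | ∃ l : ℕ, (x 0 = (l : ℝ) ∧ x 1 = 2 * (l : ℝ)) ∨ (x 0 = 2 * (l : ℝ) ∧ x 1 = (l : ℝ))}

/-- A polytope: a bounded set of the form {x : Ax ≥ b}. -/
def IsPolytope (S : Set (Fin 2 → ℝ)) : Prop :=
  ∃ (m : ℕ) (A : Matrix (Fin m) (Fin 2) ℝ) (b : Fin m → ℝ),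
    S = {x | ∀ i, b i ≤ ∑ j, A i j * x j} ∧ Bornology.IsBounded S

/-- intcone{r¹,…,rᵗ}: the set of nonnegative integer combinations of r¹,…,rᵗ ∈ ℤ². -/
def intcone {t : ℕ} (r : Fin t → Fin 2 → ℤ) : Set (Fin 2 → ℝ) :=
  {x | ∃ lam : Fin t → ℕ, ∀ j, x j = ∑ i, (lam i : ℝ) * (r i j : ℝ)}

/-!
If `E = P + C` with `P` bounded and `C` the integer cone, then `0 ∈ E` forces `C ⊆ E`. Being
closed under addition, `C` then lies on one of the two rays of `E`, since nonzero points of both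
rays add up to a point off both rays. A linear functional vanishing on that ray is bounded on
`P + C = E`, but it is unbounded along the other ray.

If `E` were MILP-representable, the lifts of the points `k • (1, 2)` would give, by
Fourier–Motzkin elimination, a rational recession direction of the lifted polyhedron with
`x`-part `(1, 2)`. A multiple `N` of it has integral `z`-part, so adding it to a lift of `(2, 1)`
lifts `(2, 1) + N • (1, 2)`, which lies on neither ray.
-/

open Matrix

section DotProduct

variable {R : Type*} [Mul R] [AddCommMonoid R]

lemma dotProduct_snoc {d : ℕ} (a : Fin (d + 1) → R) (v : Fin d → R) (t : R) :
    a ⬝ᵥ Fin.snoc v t = Fin.init a ⬝ᵥ v + a (Fin.last d) * t := by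
  simp [dotProduct, Fin.sum_univ_castSucc, Fin.init]

lemma append_dotProduct_append {p q : ℕ} (a y : Fin p → R) (b z : Fin q → R) :
    Fin.append a b ⬝ᵥ Fin.append y z = a ⬝ᵥ y + b ⬝ᵥ z := by
  simp [dotProduct, Fin.sum_univ_add]

lemma Subfield.dotProduct_mem {K : Type*} [DivisionRing K] (F : Subfield K) {n : ℕ}
    {a v : Fin n → K} (ha : ∀ k, a k ∈ F) (hv : ∀ k, v k ∈ F) : a ⬝ᵥ v ∈ F :=
  F.sum_mem fun k _ => F.mul_mem (ha k) (hv k)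

end DotProduct

namespace FourierMotzkin

variable {𝕜 : Type*} [Field 𝕜] {ι : Type*} {d : ℕ}

def lastBound (a : Fin (d + 1) → 𝕜) (b : 𝕜) (v : Fin d → 𝕜) : 𝕜 :=
  (b - Fin.init a ⬝ᵥ v) / a (Fin.last d)

lemma lastBound_mem (F : Subfield 𝕜) {a : Fin (d + 1) → 𝕜} {b : 𝕜} {v : Fin d → 𝕜}
    (ha : ∀ k, a k ∈ F) (hb : b ∈ F) (hv : ∀ k, v k ∈ F) : lastBound a b v ∈ F :=
  F.div_mem (F.sub_mem hb (F.dotProduct_mem (fun _ => ha _) hv)) (ha _)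

variable [LinearOrder 𝕜]

lemma exists_mem_between {α β : Type*} [Finite α] [Finite β] (F : Subfield 𝕜) (f : α → 𝕜)
    (g : β → 𝕜) (hf : ∀ a, f a ∈ F) (hg : ∀ b, g b ∈ F) (hfg : ∀ a b, f a ≤ g b) :
    ∃ t ∈ F, (∀ a, f a ≤ t) ∧ ∀ b, t ≤ g b := by
  rcases isEmpty_or_nonempty α with hα | hα
  · rcases isEmpty_or_nonempty β with hβ | hβ
    · exact ⟨0, F.zero_mem, isEmptyElim, isEmptyElim⟩
    · obtain ⟨b₀, hb₀⟩ := Finite.exists_min g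
      exact ⟨g b₀, hg b₀, isEmptyElim, hb₀⟩
  · obtain ⟨a₀, ha₀⟩ := Finite.exists_max f
    exact ⟨f a₀, hf a₀, ha₀, hfg a₀⟩

/-- Fourier–Motzkin elimination of the last variable keeps the rows of `A` that do not involve
it and adds one combination cancelling it for every pair of rows in which it has opposite
signs. -/
abbrev ElimIndex (A : Matrix ι (Fin (d + 1)) 𝕜) : Type _ :=
  {i // A i (Fin.last d) = 0} ⊕
    {ij : ι × ι // 0 < A ij.1 (Fin.last d) ∧ A ij.2 (Fin.last d) < 0}

def elimMatrix (A : Matrix ι (Fin (d + 1)) 𝕜) : Matrix (ElimIndex A) (Fin d) 𝕜 :=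
  Sum.elim (fun i => Fin.init (A i)) fun ij =>
    A ij.1.1 (Fin.last d) • Fin.init (A ij.1.2) - A ij.1.2 (Fin.last d) • Fin.init (A ij.1.1)

def elimRhs (A : Matrix ι (Fin (d + 1)) 𝕜) (β : ι → 𝕜) : ElimIndex A → 𝕜 :=
  Sum.elim (fun i => β i) fun ij =>
    A ij.1.1 (Fin.last d) * β ij.1.2 - A ij.1.2 (Fin.last d) * β ij.1.1

@[simp]
lemma elimRhs_zero (A : Matrix ι (Fin (d + 1)) 𝕜) : elimRhs A 0 = 0 := by
  ext (_ | _) <;> simp [elimRhs]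

lemma elimMatrix_mem (F : Subfield 𝕜) {A : Matrix ι (Fin (d + 1)) 𝕜}
    (hA : ∀ i k, A i k ∈ F) : ∀ e k, elimMatrix A e k ∈ F
  | .inl _, _ => hA _ _
  | .inr _, _ => F.sub_mem (F.mul_mem (hA _ _) (hA _ _)) (F.mul_mem (hA _ _) (hA _ _))

lemma elimRhs_mem (F : Subfield 𝕜) {A : Matrix ι (Fin (d + 1)) 𝕜} {β : ι → 𝕜}
    (hA : ∀ i k, A i k ∈ F) (hβ : ∀ i, β i ∈ F) : ∀ e, elimRhs A β e ∈ F
  | .inl _ => hβ _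
  | .inr _ => F.sub_mem (F.mul_mem (hA _ _) (hβ _)) (F.mul_mem (hA _ _) (hβ _))

variable [IsStrictOrderedRing 𝕜]

lemma le_dotProduct_snoc_iff_of_pos {a : Fin (d + 1) → 𝕜} (ha : 0 < a (Fin.last d))
    (b : 𝕜) (v : Fin d → 𝕜) (t : 𝕜) : b ≤ a ⬝ᵥ Fin.snoc v t ↔ lastBound a b v ≤ t := by
  rw [lastBound, div_le_iff₀ ha, dotProduct_snoc]
  constructor <;> intro h <;> linarith

lemma le_dotProduct_snoc_iff_of_neg {a : Fin (d + 1) → 𝕜} (ha : a (Fin.last d) < 0)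
    (b : 𝕜) (v : Fin d → 𝕜) (t : 𝕜) : b ≤ a ⬝ᵥ Fin.snoc v t ↔ t ≤ lastBound a b v := by
  rw [lastBound, le_div_iff_of_neg ha, dotProduct_snoc]
  constructor <;> intro h <;> linarith

lemma elimRhs_le_iff {A : Matrix ι (Fin (d + 1)) 𝕜} {β : ι → 𝕜} {v : Fin d → 𝕜} {i j : ι}
    (hi : 0 < A i (Fin.last d)) (hj : A j (Fin.last d) < 0) :
    elimRhs A β (.inr ⟨(i, j), hi, hj⟩) ≤ (elimMatrix A *ᵥ v) (.inr ⟨(i, j), hi, hj⟩) ↔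
      lastBound (A i) (β i) v ≤ lastBound (A j) (β j) v := by
  simp only [elimRhs, elimMatrix, lastBound, mulVec, Sum.elim_inr, sub_dotProduct,
    smul_dotProduct, smul_eq_mul]
  rw [← neg_div_neg_eq (β j - _), div_le_div_iff₀ hi (neg_pos.2 hj)]
  constructor <;> intro h <;> linarith

lemma elimRhs_le_elimMatrix_mulVec_init {A : Matrix ι (Fin (d + 1)) 𝕜} {β : ι → 𝕜}
    {u : Fin (d + 1) → 𝕜} (h : β ≤ A *ᵥ u) :
    elimRhs A β ≤ elimMatrix A *ᵥ Fin.init u := by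
  rw [← Fin.snoc_init_self u] at h
  rintro (⟨i, hi⟩ | ⟨⟨i, j⟩, hi, hj⟩)
  · simpa [elimRhs, elimMatrix, mulVec, dotProduct_snoc, hi, -Fin.snoc_init_self] using h i
  · exact (elimRhs_le_iff hi hj).2 <|
      ((le_dotProduct_snoc_iff_of_pos hi _ _ _).1 (h i)).trans
        ((le_dotProduct_snoc_iff_of_neg hj _ _ _).1 (h j))

lemma exists_mem_le_mulVec_snoc [Finite ι] (F : Subfield 𝕜) {A : Matrix ι (Fin (d + 1)) 𝕜}
    {β : ι → 𝕜} {v : Fin d → 𝕜} (hA : ∀ i k, A i k ∈ F) (hβ : ∀ i, β i ∈ F)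
    (hv : ∀ k, v k ∈ F) (h : elimRhs A β ≤ elimMatrix A *ᵥ v) :
    ∃ t ∈ F, β ≤ A *ᵥ Fin.snoc v t := by
  obtain ⟨t, htF, hlow, hup⟩ := exists_mem_between F
    (fun i : {i // 0 < A i (Fin.last d)} => lastBound (A i) (β i) v)
    (fun j : {j // A j (Fin.last d) < 0} => lastBound (A j) (β j) v)
    (fun _ => lastBound_mem F (hA _) (hβ _) hv) (fun _ => lastBound_mem F (hA _) (hβ _) hv)
    (fun i j => (elimRhs_le_iff i.2 j.2).1 (h _))
  refine ⟨t, htF, fun i => ?_⟩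
  rcases lt_trichotomy (A i (Fin.last d)) 0 with hneg | hzero | hpos
  · exact (le_dotProduct_snoc_iff_of_neg hneg _ _ _).2 (hup ⟨i, hneg⟩)
  · simpa [elimRhs, elimMatrix, mulVec, dotProduct_snoc, hzero] using h (.inl ⟨i, hzero⟩)
  · exact (le_dotProduct_snoc_iff_of_pos hpos _ _ _).2 (hlow ⟨i, hpos⟩)

theorem exists_mulVec_nonneg_of_forall_nat [Archimedean 𝕜] :
    ∀ {d : ℕ} {ι : Type*} [Finite ι] (A : Matrix ι (Fin (d + 1)) 𝕜) (β : ι → 𝕜),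
      (∀ n : ℕ, ∃ u : Fin (d + 1) → 𝕜, u 0 = n ∧ β ≤ A *ᵥ u) →
        ∃ u : Fin (d + 1) → 𝕜, u 0 = 1 ∧ 0 ≤ A *ᵥ u
  | 0, ι, _, A, β, h => by
    refine ⟨fun _ => 1, rfl, fun i => ?_⟩
    by_contra! hneg
    replace hneg : A i 0 < 0 := by simpa [mulVec, dotProduct] using hneg
    obtain ⟨n, hn⟩ := exists_nat_gt (β i / A i 0)
    obtain ⟨u, hu0, hu⟩ := h n
    have hi : β i ≤ n * A i 0 := by simpa [mulVec, dotProduct, hu0, mul_comm] using hu i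
    exact hn.not_ge ((le_div_iff_of_neg hneg).2 hi)
  | d + 1, ι, _, A, β, h => by
    obtain ⟨v, hv0, hv⟩ := exists_mulVec_nonneg_of_forall_nat (elimMatrix A) (elimRhs A β)
      fun n => by
        obtain ⟨u, hu0, hu⟩ := h n
        refine ⟨Fin.init u, ?_, elimRhs_le_elimMatrix_mulVec_init hu⟩
        simpa [Fin.init] using hu0
    obtain ⟨t, -, ht⟩ := exists_mem_le_mulVec_snoc (⊤ : Subfield 𝕜) (A := A) (β := 0)
      (fun _ _ => trivial) (fun _ => trivial) (fun _ => trivial) (by rwa [elimRhs_zero])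
    exact ⟨Fin.snoc v t, by simpa using hv0, ht⟩

theorem exists_solution_mem_subfield (F : Subfield 𝕜) :
    ∀ {d : ℕ} {ι : Type*} [Finite ι] (A : Matrix ι (Fin (d + 1)) 𝕜) (β : ι → 𝕜),
      (∀ i k, A i k ∈ F) → (∀ i, β i ∈ F) →
        (∃ u : Fin (d + 1) → 𝕜, u 0 = 1 ∧ β ≤ A *ᵥ u) →
          ∃ u : Fin (d + 1) → 𝕜, (∀ k, u k ∈ F) ∧ u 0 = 1 ∧ β ≤ A *ᵥ u
  | 0, _, _, _, _, _, _, ⟨u, hu0, hu⟩ =>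
    ⟨u, fun k => by rw [Fin.fin_one_eq_zero k, hu0]; exact F.one_mem, hu0, hu⟩
  | d + 1, _, _, A, β, hA, hβ, ⟨u, hu0, hu⟩ => by
    obtain ⟨v, hvF, hv0, hv⟩ := exists_solution_mem_subfield F (elimMatrix A) (elimRhs A β)
      (elimMatrix_mem F hA) (elimRhs_mem F hA hβ)
      ⟨Fin.init u, by simpa [Fin.init] using hu0, elimRhs_le_elimMatrix_mulVec_init hu⟩
    obtain ⟨t, htF, ht⟩ := exists_mem_le_mulVec_snoc F hA hβ hvF hv
    refine ⟨Fin.snoc v t, Fin.lastCases ?_ fun k => ?_, by simpa using hv0, ht⟩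
    · simpa using htF
    · simpa using hvF k

end FourierMotzkin

lemma exists_nat_mul_eq_intCast {ι : Type*} [Fintype ι] (f : ι → ℚ) :
    ∃ N : ℕ, 0 < N ∧ ∀ i, ∃ z : ℤ, (N : ℚ) * f i = z := by
  classical
  refine ⟨∏ i, (f i).den, Finset.prod_pos fun i _ => (f i).den_pos, fun i =>
    ⟨(f i).num * ∏ j ∈ Finset.univ.erase i, ((f j).den : ℤ), ?_⟩⟩
  rw [← Finset.prod_erase_mul _ _ (Finset.mem_univ i)]
  push_cast
  rw [← Rat.mul_den_eq_num]
  ring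

open FourierMotzkin in
theorem exists_integral_recession {p q m : ℕ} (a : Fin m → ℚ)
    (C : Matrix (Fin m) (Fin p) ℚ) (D : Matrix (Fin m) (Fin q) ℚ) (b : Fin m → ℝ)
    (h : ∀ k : ℕ, ∃ (y : Fin p → ℝ) (z : Fin q → ℤ),
      b ≤ (k : ℝ) • (Rat.cast ∘ a) + C.map (↑) *ᵥ y + D.map (↑) *ᵥ (Int.cast ∘ z)) :
    ∃ N : ℕ, 0 < N ∧ ∃ (y : Fin p → ℝ) (z : Fin q → ℤ),
      0 ≤ (N : ℝ) • (Rat.cast ∘ a) + C.map (↑) *ᵥ y + D.map (↑) *ᵥ (Int.cast ∘ z) := by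
  -- the system in the variables `vecCons s (Fin.append y z)`
  set A : Matrix (Fin m) (Fin (p + q + 1)) ℝ := Matrix.of fun i =>
    vecCons (a i : ℝ) (Fin.append (fun j => (C i j : ℝ)) fun j => (D i j : ℝ))
  have hA : ∀ s y z, A *ᵥ vecCons s (Fin.append y z) =
      s • (Rat.cast ∘ a) + C.map (↑) *ᵥ y + D.map (↑) *ᵥ z := by
    intro s y z
    ext i
    simp [A, mulVec, append_dotProduct_append, add_assoc, mul_comm]
  obtain ⟨u₀, hu₀0, hu₀⟩ := exists_mulVec_nonneg_of_forall_nat A b fun k => by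
    obtain ⟨y, z, hyz⟩ := h k
    exact ⟨vecCons (k : ℝ) (Fin.append y (Int.cast ∘ z)), rfl, by rwa [hA]⟩
  have hAℚ : ∀ i k, A i k ∈ (Rat.castHom ℝ).fieldRange := by
    intro i k
    refine Fin.cases ?_ (Fin.addCases (fun j => ?_) fun j => ?_) k
    · exact ⟨a i, by simp [A]⟩
    · exact ⟨C i j, by simp [A]⟩
    · exact ⟨D i j, by simp [A]⟩
  obtain ⟨u, hu, hu0, hdir⟩ :=
    exists_solution_mem_subfield _ A 0 hAℚ (fun _ => zero_mem _) ⟨u₀, hu₀0, hu₀⟩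
  obtain ⟨y, z, rfl⟩ : ∃ y z, u = vecCons 1 (Fin.append y z) :=
    ⟨_, _, by rw [Fin.append_castAdd_natAdd, ← hu0]; exact (Fin.cons_self_tail u).symm⟩
  choose zℚ hzℚ using fun j => hu (Fin.succ (Fin.natAdd p j))
  simp only [Rat.coe_castHom, cons_val_succ, Fin.append_right] at hzℚ
  obtain ⟨N, hN, hNz⟩ := exists_nat_mul_eq_intCast zℚ
  choose w hw using hNz
  have hwz : (Int.cast ∘ w : Fin q → ℝ) = (N : ℝ) • z := by
    ext j
    simp only [Function.comp_apply, Pi.smul_apply, smul_eq_mul, ← hzℚ]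
    exact_mod_cast (hw j).symm
  refine ⟨N, hN, (N : ℝ) • y, w, ?_⟩
  rw [hA, one_smul] at hdir
  rw [hwz, mulVec_smul, mulVec_smul, ← smul_add, ← smul_add]
  exact smul_nonneg (Nat.cast_nonneg N) hdir

lemma MILPRep.exists_mulVec {n : ℕ} {S : Set (Fin n → ℝ)} (hS : MILPRep n S) :
    ∃ (p q m : ℕ) (B : Matrix (Fin m) (Fin n) ℚ) (C : Matrix (Fin m) (Fin p) ℚ)
      (D : Matrix (Fin m) (Fin q) ℚ) (b : Fin m → ℝ), ∀ x, x ∈ S ↔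
        ∃ (y : Fin p → ℝ) (z : Fin q → ℤ),
          b ≤ B.map (↑) *ᵥ x + C.map (↑) *ᵥ y + D.map (↑) *ᵥ (Int.cast ∘ z) := by
  obtain ⟨p, q, m, B, C, D, b, rfl⟩ := hS
  exact ⟨p, q, m, B, C, D, b, fun _ => Iff.rfl⟩

theorem MILPRep.exists_add_nsmul_mem {n : ℕ} {S : Set (Fin n → ℝ)} (hS : MILPRep n S)
    (d : Fin n → ℚ) (hd : ∀ k : ℕ, (k : ℝ) • (Rat.cast ∘ d) ∈ S) {x : Fin n → ℝ}
    (hx : x ∈ S) : ∃ N : ℕ, 0 < N ∧ x + (N : ℝ) • (Rat.cast ∘ d) ∈ S := by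
  obtain ⟨p, q, m, B, C, D, b, hS⟩ := hS.exists_mulVec
  have hBd : ∀ s : ℝ, (B.map (↑) : Matrix (Fin m) (Fin n) ℝ) *ᵥ (s • (Rat.cast ∘ d)) =
      s • (Rat.cast ∘ (B *ᵥ d)) := by
    intro s
    rw [mulVec_smul]
    congr 1
    ext i
    exact ((Rat.castHom ℝ).map_mulVec B d i).symm
  simp only [hS, hBd] at hd hx ⊢
  obtain ⟨N, hN, y', z', hdir⟩ := exists_integral_recession (B *ᵥ d) C D b hd
  obtain ⟨y, z, hyz⟩ := hx
  refine ⟨N, hN, y + y', z + z', ?_⟩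
  calc b ≤ B.map (↑) *ᵥ x + C.map (↑) *ᵥ y + D.map (↑) *ᵥ (Int.cast ∘ z) +
          ((N : ℝ) • (Rat.cast ∘ (B *ᵥ d)) + C.map (↑) *ᵥ y' +
            D.map (↑) *ᵥ (Int.cast ∘ z')) :=
      le_add_of_le_of_nonneg hyz hdir
    _ = _ := by
      have hz : (Int.cast ∘ (z + z') : Fin q → ℝ) = Int.cast ∘ z + Int.cast ∘ z' := by
        ext
        simp
      rw [mulVec_add, mulVec_add, hBd, hz, mulVec_add]
      abel

lemma AddSubmonoid.coe_subset_add_of_zero_mem {M : Type*} [AddMonoid M] {P : Set M}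
    {C : AddSubmonoid M} (h0 : (0 : M) ∈ P + C) : (C : Set M) ⊆ P + C := by
  obtain ⟨p, hp, c₀, hc₀, hpc : p + c₀ = 0⟩ := h0
  intro c hc
  refine ⟨p, hp, c₀ + c, C.add_mem hc₀ hc, ?_⟩
  show p + (c₀ + c) = c
  rw [← add_assoc, hpc, zero_add]

lemma image_add_subset_image_of_map_eq_zero {M N F : Type*} [Add M] [AddZeroClass N]
    [FunLike F M N] [AddHomClass F M N] (f : F) {P C : Set M} (hC : ∀ c ∈ C, f c = 0) :
    f '' (P + C) ⊆ f '' P := by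
  rintro _ ⟨_, ⟨p, hp, c, hc, rfl⟩, rfl⟩
  exact ⟨p, hp, by rw [map_add, hC c hc, add_zero]⟩

lemma IsPolytope.isBounded {S : Set (Fin 2 → ℝ)} (hS : IsPolytope S) :
    Bornology.IsBounded S := by
  obtain ⟨_, _, _, _, h⟩ := hS
  exact h

def intconeAddSubmonoid {t : ℕ} (r : Fin t → Fin 2 → ℤ) : AddSubmonoid (Fin 2 → ℝ) where
  carrier := intcone r
  add_mem' := by
    rintro _ _ ⟨μ, hμ⟩ ⟨ν, hν⟩
    exact ⟨μ + ν, fun j => by simp [hμ, hν, add_mul, Finset.sum_add_distrib]⟩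
  zero_mem' := ⟨0, by simp⟩

lemma zero_mem_Eset : (0 : Fin 2 → ℝ) ∈ Eset := ⟨0, Or.inl ⟨by simp, by simp⟩⟩

lemma Eset_ray_of_addSubmonoid {C : AddSubmonoid (Fin 2 → ℝ)}
    (hC : (C : Set (Fin 2 → ℝ)) ⊆ Eset) :
    (∀ c ∈ C, c 1 = 2 * c 0) ∨ ∀ c ∈ C, c 0 = 2 * c 1 := by
  by_contra! ⟨⟨c, hc, hc1⟩, e, he, he0⟩
  obtain ⟨l, ⟨hl0, hl1⟩ | ⟨hl0, hl1⟩⟩ := hC hc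
  · exact hc1 (by linarith)
  obtain ⟨l', ⟨hl0', hl1'⟩ | ⟨hl0', hl1'⟩⟩ := hC he
  swap
  · exact he0 (by linarith)
  obtain ⟨l'', ⟨h0, h1⟩ | ⟨h0, h1⟩⟩ := hC (C.add_mem hc he) <;>
    simp only [Pi.add_apply] at h0 h1
  · exact hc1 (by linarith)
  · exact he0 (by linarith)

lemma exists_clm_eq_zero_not_bddAbove_Eset {C : AddSubmonoid (Fin 2 → ℝ)}
    (hC : (C : Set (Fin 2 → ℝ)) ⊆ Eset) :
    ∃ f : (Fin 2 → ℝ) →L[ℝ] ℝ, (∀ c ∈ C, f c = 0) ∧ ¬ BddAbove (f '' Eset) := by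
  rcases Eset_ray_of_addSubmonoid hC with h | h
  · refine ⟨2 • .proj 0 - .proj 1, fun c hc => by simp [h c hc],
      not_bddAbove_iff.2 fun M => ?_⟩
    obtain ⟨k, hk⟩ := exists_nat_gt M
    exact ⟨_, ⟨![2 * k, k], ⟨k, Or.inr ⟨by simp, by simp⟩⟩, rfl⟩, by simp; linarith⟩
  · refine ⟨2 • .proj 1 - .proj 0, fun c hc => by simp [h c hc],
      not_bddAbove_iff.2 fun M => ?_⟩
    obtain ⟨k, hk⟩ := exists_nat_gt M
    exact ⟨_, ⟨![k, 2 * k], ⟨k, Or.inl ⟨by simp, by simp⟩⟩, rfl⟩, by simp; linarith⟩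

theorem not_milpRep_Eset : ¬ MILPRep 2 Eset := by
  intro hS
  obtain ⟨N, hN, l, hl⟩ := hS.exists_add_nsmul_mem ![1, 2]
    (fun k => ⟨k, Or.inl ⟨by simp, by simp [mul_comm]⟩⟩) (x := ![2, 1])
    ⟨1, Or.inr ⟨by norm_num, by norm_num⟩⟩
  have hN1 : (1 : ℝ) ≤ N := by exact_mod_cast hN
  rcases hl with ⟨h0, h1⟩ | ⟨h0, h1⟩ <;> simp at h0 h1 <;> linarith

/-- E cannot be written as (⋃ᵢ Pᵢ) + intcone{r¹,…,rᵗ} with polytopes Pᵢ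
and integer vectors rʲ; in particular (by Jeroslow–Lowe), E is not MILP-representable. -/
theorem stmt0 :
    (¬ ∃ (k t : ℕ) (P : Fin k → Set (Fin 2 → ℝ)) (r : Fin t → Fin 2 → ℤ),
        (∀ i, IsPolytope (P i)) ∧ Eset = (⋃ i, P i) + intcone r) ∧
    ¬ MILPRep 2 Eset := by
  refine ⟨?_, not_milpRep_Eset⟩
  rintro ⟨k, t, P, r, hP, hE⟩
  have hC : (intconeAddSubmonoid r : Set (Fin 2 → ℝ)) ⊆ Eset := by
    rw [hE]
    exact AddSubmonoid.coe_subset_add_of_zero_mem (hE ▸ zero_mem_Eset)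
  obtain ⟨f, hfC, hfE⟩ := exists_clm_eq_zero_not_bddAbove_Eset hC
  have hPb : Bornology.IsBounded (⋃ i, P i) :=
    Bornology.isBounded_iUnion.2 fun i => (hP i).isBounded
  refine hfE ((f.lipschitz.isBounded_image hPb).bddAbove.mono ?_)
  rw [hE]
  exact image_add_subset_image_of_map_eq_zero f hfC
end

section
/- Let A be an integral m×n matrix and b ∈ ℝᵐ, and suppose the system Ax ≥ b is totally dual integral and P = {x : Ax ≥ b} is nonempty. Then the Chvátal closure of P equals {x : Ax ≥ ⌈b⌉}, where ⌈b⌉ is the componentwise ceiling of b. -/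
/-- The Chvátal closure of a set P ⊆ ℝⁿ: the intersection, over all inequalities
cᵀx ≥ d valid for P with c integral, of the halfspaces {x : cᵀx ≥ ⌈d⌉}. -/
def chvatalClosure {n : ℕ} (P : Set (Fin n → ℝ)) : Set (Fin n → ℝ) :=
  {x | ∀ (c : Fin n → ℤ) (d : ℝ), (∀ y ∈ P, d ≤ ∑ i, (c i : ℝ) * y i) →
        (⌈d⌉ : ℝ) ≤ ∑ i, (c i : ℝ) * x i}

/-- The t-th iterated Chvátal closure. -/
def chvatalIter {n : ℕ} (t : ℕ) (P : Set (Fin n → ℝ)) : Set (Fin n → ℝ) :=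
  chvatalClosure^[t] P

/-- Total dual integrality of an integral system Ax ≥ b (b possibly nonrational):
whenever the minimum of cᵀx over {x : Ax ≥ b} is attained (finite) for an integral c,
there is an integral dual-feasible y with yᵀA = c whose objective yᵀb equals the minimum. -/
def TDIInt {m n : ℕ} (A : Matrix (Fin m) (Fin n) ℤ) (b : Fin m → ℝ) : Prop :=
  ∀ (c : Fin n → ℤ) (v : ℝ),
    IsLeast {w : ℝ | ∃ x : Fin n → ℝ,
        (∀ i, b i ≤ ∑ j, (A i j : ℝ) * x j) ∧ w = ∑ j, (c j : ℝ) * x j} v →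
    ∃ y : Fin m → ℤ, (∀ i, 0 ≤ y i) ∧
      (∀ j, ∑ i, y i * A i j = c j) ∧ (∑ i, (y i : ℝ) * b i) = v


/-!
The rows of `Ax ≥ b` are themselves integral cuts, which gives one inclusion. Conversely, let
`cᵀx ≥ d` be valid for `P` with `c` integral. By Fourier–Motzkin elimination the set of values
of `cᵀx` on `P` is a one-dimensional polyhedron, hence closed, so the linear program
`min {cᵀx : x ∈ P}` attains its value `v ≥ d`. Total dual integrality gives `y ≥ 0` integral with
`yᵀA = c` and `yᵀb = v`; then `yᵀ⌈b⌉` is an integer at least `d`, so for `Ax ≥ ⌈b⌉` we get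
`⌈d⌉ ≤ yᵀ⌈b⌉ ≤ yᵀAx = cᵀx`.
-/

lemma LinearMap.apply_prod_eq {R M : Type*} [CommSemiring R] [AddCommMonoid M] [Module R M]
    (f : Module.Dual R (M × R)) (y : M) (t : R) : f (y, t) = f (y, 0) + t * f (0, 1) := by
  rw [← smul_eq_mul, ← map_smul, ← map_add]
  simp

lemma exists_between_of_finite {α : Type*} [LinearOrder α] [Nonempty α] {L U : Set α}
    (hL : L.Finite) (hU : U.Finite) (h : ∀ l ∈ L, ∀ u ∈ U, l ≤ u) :
    ∃ s, (∀ l ∈ L, l ≤ s) ∧ ∀ u ∈ U, s ≤ u := by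
  rcases L.eq_empty_or_nonempty with rfl | hLne
  · rcases U.eq_empty_or_nonempty with rfl | hUne
    · exact ⟨Classical.arbitrary α, by simp⟩
    obtain ⟨u₀, hu₀, hmin⟩ := Set.exists_min_image U id hU hUne
    exact ⟨u₀, by simp, hmin⟩
  obtain ⟨l₀, hl₀, hmax⟩ := Set.exists_max_image L id hL hLne
  exact ⟨l₀, hmax, h l₀ hl₀⟩

section Polyhedron

variable {𝕜 E F : Type*} [Field 𝕜] [LinearOrder 𝕜]
  [AddCommGroup E] [Module 𝕜 E] [AddCommGroup F] [Module 𝕜 F]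

variable (𝕜) in
def IsPolyhedron (S : Set E) : Prop :=
  ∃ s : Set (Module.Dual 𝕜 E × 𝕜), s.Finite ∧ S = {x | ∀ p ∈ s, p.2 ≤ p.1 x}

lemma isPolyhedron_setOf_forall_le {ι : Type*} [Finite ι] (f : ι → Module.Dual 𝕜 E)
    (β : ι → 𝕜) : IsPolyhedron 𝕜 {x : E | ∀ i, β i ≤ f i x} :=
  ⟨Set.range fun i => (f i, β i), Set.finite_range _, by simp⟩

lemma isPolyhedron_setOf_le_sum {κ ι : Type*} [Finite κ] [Fintype ι] (B : κ → ι → 𝕜)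
    (b : κ → 𝕜) : IsPolyhedron 𝕜 {x : ι → 𝕜 | ∀ i, b i ≤ ∑ j, B i j * x j} :=
  isPolyhedron_setOf_forall_le (fun i => dotProductBilin 𝕜 𝕜 (B i)) b

namespace IsPolyhedron

lemma inter {S T : Set E} (hS : IsPolyhedron 𝕜 S) (hT : IsPolyhedron 𝕜 T) :
    IsPolyhedron 𝕜 (S ∩ T) := by
  obtain ⟨s, hs, rfl⟩ := hS
  obtain ⟨t, ht, rfl⟩ := hT
  refine ⟨s ∪ t, hs.union ht, ?_⟩
  ext x
  simp only [Set.mem_inter_iff, Set.mem_ofPred_eq, Set.mem_union, or_imp, forall_and]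

lemma preimage {S : Set E} (hS : IsPolyhedron 𝕜 S) (g : F →ₗ[𝕜] E) :
    IsPolyhedron 𝕜 (g ⁻¹' S) := by
  obtain ⟨s, hs, rfl⟩ := hS
  refine ⟨(fun p => (p.1 ∘ₗ g, p.2)) '' s, hs.image _, ?_⟩
  ext
  simp only [Set.mem_preimage, Set.mem_ofPred_eq, Set.forall_mem_image, LinearMap.comp_apply]

variable [IsStrictOrderedRing 𝕜]

/-- Fourier–Motzkin elimination: keep the rows not involving the last coordinate `t`, and add
the positive combination eliminating `t` of every pair of rows bounding `t` from below and
from above. -/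
lemma image_fst {S : Set (E × 𝕜)} (hS : IsPolyhedron 𝕜 S) : IsPolyhedron 𝕜 (Prod.fst '' S) := by
  obtain ⟨s, hs, rfl⟩ := hS
  set a : Module.Dual 𝕜 (E × 𝕜) × 𝕜 → 𝕜 := fun p => p.1 (0, 1)
  set g : Module.Dual 𝕜 (E × 𝕜) × 𝕜 → Module.Dual 𝕜 E := fun p => p.1 ∘ₗ LinearMap.inl 𝕜 E 𝕜
  have hrow (p : Module.Dual 𝕜 (E × 𝕜) × 𝕜) (y : E) (t : 𝕜) : p.1 (y, t) = g p y + t * a p :=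
    p.1.apply_prod_eq y t
  set pos := {p ∈ s | 0 < a p}
  set neg := {p ∈ s | a p < 0}
  refine ⟨(fun p => (g p, p.2)) '' {p ∈ s | a p = 0} ∪
    Set.image2 (fun p q => (a p • g q - a q • g p, a p * q.2 - a q * p.2)) pos neg,
    ((hs.sep _).image _).union ((hs.sep _).image2 _ (hs.sep _)), ?_⟩
  ext y
  simp only [Set.mem_ofPred_eq, Set.mem_union, or_imp, forall_and, Set.forall_mem_image,
    Set.forall_mem_image2]
  constructor
  · rintro ⟨⟨y, t⟩, hyt, rfl⟩
    refine ⟨fun p ⟨hp, ha⟩ => by simpa [hrow, ha] using hyt p hp, fun p hp q hq => ?_⟩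
    have hp' := hyt p hp.1
    have hq' := hyt q hq.1
    rw [hrow] at hp' hq'
    simp only [LinearMap.sub_apply, LinearMap.smul_apply, smul_eq_mul]
    linear_combination
      mul_le_mul_of_nonneg_left hq' hp.2.le + mul_le_mul_of_nonpos_left hp' hq.2.le
  · rintro ⟨hzero, hpair⟩
    set bound := fun p => (p.2 - g p y) / a p
    have hbounds : ∀ l ∈ bound '' pos, ∀ u ∈ bound '' neg, l ≤ u := by
      rintro _ ⟨p, hp, rfl⟩ _ ⟨q, hq, rfl⟩
      have := hpair p hp q hq
      simp only [LinearMap.sub_apply, LinearMap.smul_apply, smul_eq_mul] at this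
      rw [le_div_iff_of_neg hq.2, div_mul_eq_mul_div, le_div_iff₀ hp.2]
      linear_combination this
    obtain ⟨t, hlow, hup⟩ :=
      exists_between_of_finite ((hs.sep _).image bound) ((hs.sep _).image bound) hbounds
    refine ⟨(y, t), fun p hp => ?_, rfl⟩
    rw [hrow]
    rcases lt_trichotomy (a p) 0 with hneg | hzero' | hpos
    · have := hup _ ⟨p, ⟨hp, hneg⟩, rfl⟩
      rw [le_div_iff_of_neg hneg] at this
      linarith
    · simpa [hzero'] using hzero ⟨hp, hzero'⟩
    · have := hlow _ ⟨p, ⟨hp, hpos⟩, rfl⟩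
      rw [div_le_iff₀ hpos] at this
      linarith

lemma image_fst_of_fin {n : ℕ} {S : Set (E × (Fin n → 𝕜))} (hS : IsPolyhedron 𝕜 S) :
    IsPolyhedron 𝕜 (Prod.fst '' S) := by
  induction n with
  | zero =>
    convert hS.preimage (LinearMap.inl 𝕜 E (Fin 0 → 𝕜)) using 1
    ext y
    refine ⟨?_, fun hy => ⟨_, hy, rfl⟩⟩
    rintro ⟨⟨y, z⟩, hyz, rfl⟩
    simpa [Subsingleton.elim z 0] using hyz
  | succ n ih =>
    let g : (E × (Fin n → 𝕜)) × 𝕜 →ₗ[𝕜] E × (Fin (n + 1) → 𝕜) :=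
      (LinearMap.fst 𝕜 E _ ∘ₗ LinearMap.fst 𝕜 _ 𝕜).prod
        ((LinearMap.snd 𝕜 _ 𝕜).vecCons (LinearMap.snd 𝕜 E _ ∘ₗ LinearMap.fst 𝕜 _ 𝕜))
    have hg : Function.Surjective g := fun ⟨y, z⟩ =>
      ⟨((y, Fin.tail z), z 0), Prod.ext rfl (Fin.cons_self_tail z)⟩
    have hS' : Prod.fst '' S = Prod.fst '' (Prod.fst '' (g ⁻¹' S)) := by
      conv_lhs => rw [← Set.image_preimage_eq S hg, Set.image_image]
      rw [Set.image_image]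
      rfl
    rw [hS']
    exact ih (hS.preimage g).image_fst

lemma image_dual {n : ℕ} {S : Set (Fin n → 𝕜)} (hS : IsPolyhedron 𝕜 S)
    (c : Module.Dual 𝕜 (Fin n → 𝕜)) : IsPolyhedron 𝕜 (c '' S) := by
  let fst := LinearMap.fst 𝕜 𝕜 (Fin n → 𝕜)
  let snd := LinearMap.snd 𝕜 𝕜 (Fin n → 𝕜)
  have hgraph : IsPolyhedron 𝕜
      {q : 𝕜 × (Fin n → 𝕜) | ∀ i, 0 ≤ ![fst - c ∘ₗ snd, c ∘ₗ snd - fst] i q} :=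
    isPolyhedron_setOf_forall_le _ _
  convert ((hS.preimage snd).inter hgraph).image_fst_of_fin using 1
  ext t
  simp [fst, snd, Fin.forall_fin_two, ← le_antisymm_iff]

end IsPolyhedron

end Polyhedron

lemma IsPolyhedron.isClosed {E : Type*} [NormedAddCommGroup E] [NormedSpace ℝ E]
    [FiniteDimensional ℝ E] {S : Set E} (hS : IsPolyhedron ℝ S) : IsClosed S := by
  obtain ⟨s, -, rfl⟩ := hS
  simp only [Set.ofPred_forall]
  exact isClosed_biInter fun p _ => isClosed_le continuous_const p.1.continuous_of_finiteDimensional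

lemma exists_isLeast_of_bddBelow {κ : Type*} [Finite κ] {n : ℕ} (B : κ → Fin n → ℝ)
    (b : κ → ℝ) (c : Fin n → ℝ) (hne : {x : Fin n → ℝ | ∀ i, b i ≤ ∑ j, B i j * x j}.Nonempty)
    (hbdd : BddBelow
      {w : ℝ | ∃ x : Fin n → ℝ, (∀ i, b i ≤ ∑ j, B i j * x j) ∧ w = ∑ j, c j * x j}) :
    ∃ v, IsLeast
      {w : ℝ | ∃ x : Fin n → ℝ, (∀ i, b i ≤ ∑ j, B i j * x j) ∧ w = ∑ j, c j * x j} v := by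
  let obj := dotProductBilin ℝ ℝ c
  have hvalues : {w : ℝ | ∃ x : Fin n → ℝ, (∀ i, b i ≤ ∑ j, B i j * x j) ∧ w = ∑ j, c j * x j} =
      obj '' {x | ∀ i, b i ≤ ∑ j, B i j * x j} := by
    ext w
    simp [obj, eq_comm, dotProduct]
  rw [hvalues] at hbdd ⊢
  exact ⟨_, ((isPolyhedron_setOf_le_sum B b).image_dual obj).isClosed.isLeast_csInf
    (hne.image obj) hbdd⟩

/-- if A is integral, Ax ≥ b is TDI and P = {x : Ax ≥ b} is nonempty,
then the Chvátal closure of P is {x : Ax ≥ ⌈b⌉}. -/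
theorem stmt5 {m n : ℕ} (A : Matrix (Fin m) (Fin n) ℤ) (b : Fin m → ℝ)
    (P : Set (Fin n → ℝ))
    (hP : P = {x | ∀ i, b i ≤ ∑ j, (A i j : ℝ) * x j})
    (hne : P.Nonempty) (htdi : TDIInt A b) :
    chvatalClosure P = {x | ∀ i, (⌈b i⌉ : ℝ) ≤ ∑ j, (A i j : ℝ) * x j} := by
  subst hP
  ext x
  refine ⟨fun hx i => hx (A i) (b i) fun y hy => hy i, fun hx c d hd => ?_⟩
  obtain ⟨v, hv⟩ := exists_isLeast_of_bddBelow (fun i j => (A i j : ℝ)) b (fun j => (c j : ℝ))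
    hne ⟨d, by rintro _ ⟨x', hx', rfl⟩; exact hd x' hx'⟩
  obtain ⟨y, hy, hyA, hyb⟩ := htdi c v hv
  have hy' (i : Fin m) : (0 : ℝ) ≤ y i := by exact_mod_cast hy i
  have hdy : d ≤ ∑ i, (y i : ℝ) * ⌈b i⌉ := by
    obtain ⟨x', hx', rfl⟩ := hv.1
    calc d ≤ ∑ j, (c j : ℝ) * x' j := hd x' hx'
      _ = ∑ i, (y i : ℝ) * b i := hyb.symm
      _ ≤ ∑ i, (y i : ℝ) * ⌈b i⌉ := by gcongr with i; exacts [hy' i, Int.le_ceil _]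
  calc (⌈d⌉ : ℝ) ≤ ((∑ i, y i * ⌈b i⌉ : ℤ) : ℝ) := by
        exact_mod_cast Int.ceil_le.2 (by exact_mod_cast hdy)
    _ ≤ ∑ i, (y i : ℝ) * ∑ j, (A i j : ℝ) * x j := by
      push_cast
      gcongr with i
      exacts [hy' i, hx i]
    _ = ∑ j, (∑ i, (y i : ℝ) * A i j) * x j := by
      simp only [Finset.mul_sum, Finset.sum_mul, mul_assoc]
      exact Finset.sum_comm
    _ = ∑ j, (c j : ℝ) * x j := by
      simp only [← hyA]
      push_cast
      rfl
end

section
/- Let A be a rational m×n matrix. Then there exists a nonnegative rational q×m matrix U, depending only on A, such that for every b ∈ ℝᵐ, the polyhedron P = {x ∈ ℝⁿ : Ax ≥ b} satisfies P = {x ∈ ℝⁿ : (UA)x ≥ Ub} and the system (UA)x ≥ Ub is totally dual integral. -/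
/-- Total dual integrality of a rational system Mx ≥ b (b possibly nonrational):
whenever the minimum of cᵀx over {x : Mx ≥ b} is attained (finite) for an integral c,
there is an integral dual-feasible y with yᵀM = c whose objective yᵀb equals the minimum. -/
def TDIQ {m n : ℕ} (M : Matrix (Fin m) (Fin n) ℚ) (b : Fin m → ℝ) : Prop :=
  ∀ (c : Fin n → ℤ) (v : ℝ),
    IsLeast {w : ℝ | ∃ x : Fin n → ℝ,
        (∀ i, b i ≤ ∑ j, (M i j : ℝ) * x j) ∧ w = ∑ j, (c j : ℝ) * x j} v →
    ∃ y : Fin m → ℤ, (∀ i, 0 ≤ y i) ∧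
      (∀ j, ∑ i, (y i : ℚ) * M i j = (c j : ℚ)) ∧ (∑ i, (y i : ℝ) * b i) = v


/-!
Take `U = D⁻¹ • 1`, where `D` is a common denominator of rational right inverses of all
row-independent submatrices of `A`; scaling by `D⁻¹ > 0` does not change the polyhedron. If
`cᵀx` attains its minimum over it at `x₀`, Farkas' lemma puts `c` in the cone of the rows tight
at `x₀`, and Carathéodory's theorem in the cone of a linearly independent subset of them. The
coefficients are then `c` times a rational right inverse, so multiplying them by `D` gives a
nonnegative integral vector, which is an optimal dual solution of the scaled system by
complementary slackness.
-/

open Matrix Filter Topology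

section ConicHull

variable (𝕜 : Type*) {ι E : Type*} [Field 𝕜] [LinearOrder 𝕜] [IsStrictOrderedRing 𝕜]
  [AddCommGroup E] [Module 𝕜 E]

def conicHull (v : ι → E) (s : Finset ι) : PointedCone 𝕜 E where
  carrier := {x | ∃ y : ι → 𝕜, (∀ i, 0 ≤ y i) ∧ ∑ i ∈ s, y i • v i = x}
  add_mem' := by
    rintro _ _ ⟨y, hy, rfl⟩ ⟨y', hy', rfl⟩
    exact ⟨y + y', fun i => add_nonneg (hy i) (hy' i),
      by simp [add_smul, Finset.sum_add_distrib]⟩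
  zero_mem' := ⟨0, fun _ => le_rfl, by simp⟩
  smul_mem' := by
    rintro c _ ⟨y, hy, rfl⟩
    exact ⟨fun i => c * y i, fun i => mul_nonneg c.2 (hy i), by
      simp [Finset.smul_sum, mul_smul]⟩

variable {𝕜} {v : ι → E} {s : Finset ι} {x : E}

theorem mem_conicHull :
    x ∈ conicHull 𝕜 v s ↔ ∃ y : ι → 𝕜, (∀ i, 0 ≤ y i) ∧ ∑ i ∈ s, y i • v i = x :=
  Iff.rfl

theorem mem_conicHull_of_mem {i : ι} (hi : i ∈ s) : v i ∈ conicHull 𝕜 v s := by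
  classical
  exact ⟨Pi.single i 1, fun j => by by_cases h : j = i <;> simp [h], by
    rw [Finset.sum_eq_single_of_mem i hi fun j _ hj => by simp [hj]]; simp⟩

theorem conicHull_mono {t : Finset ι} (hts : t ⊆ s) :
    conicHull 𝕜 v t ≤ conicHull 𝕜 v s := by
  classical
  rintro _ ⟨y, hy, rfl⟩
  refine ⟨fun i => if i ∈ t then y i else 0, fun i => by dsimp only; split_ifs <;> simp [hy], ?_⟩
  rw [← Finset.sum_subset hts fun i _ hi => by simp [hi]]
  exact Finset.sum_congr rfl fun i hi => by simp [hi]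

/-- Moving along a linear relation among the generators until a first coefficient vanishes. -/
theorem exists_mem_conicHull_erase [DecidableEq ι] (hx : x ∈ conicHull 𝕜 v s) {g : ι → 𝕜}
    (hgs : ∀ i ∉ s, g i = 0) (hgv : ∑ i ∈ s, g i • v i = 0) {i₀ : ι} (hi₀ : 0 < g i₀) :
    ∃ i ∈ s, x ∈ conicHull 𝕜 v (s.erase i) := by
  obtain ⟨y, hy, rfl⟩ := hx
  have mem_of_pos {i} (hi : 0 < g i) : i ∈ s := by_contra fun h => hi.ne' (hgs i h)
  obtain ⟨i₁, hi₁, hmin⟩ := (s.filter (0 < g ·)).exists_min_image (fun i => y i / g i)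
    ⟨i₀, Finset.mem_filter.mpr ⟨mem_of_pos hi₀, hi₀⟩⟩
  rw [Finset.mem_filter] at hi₁
  obtain ⟨hi₁s, hi₁⟩ := hi₁
  set r := y i₁ / g i₁
  refine ⟨i₁, hi₁s, fun i => y i - r * g i, fun i => ?_, ?_⟩
  · rcases lt_or_ge 0 (g i) with hgi | hgi
    · have := mul_le_mul_of_nonneg_right
        (hmin i (Finset.mem_filter.mpr ⟨mem_of_pos hgi, hgi⟩)) hgi.le
      rw [div_mul_cancel₀ _ hgi.ne'] at this
      exact sub_nonneg.mpr this
    · nlinarith [hy i, div_nonneg (hy i₁) hi₁.le]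
  · have hr : y i₁ - r * g i₁ = 0 := by simp [r, div_mul_cancel₀ _ hi₁.ne']
    rw [Finset.sum_erase _ (by simp only [hr, zero_smul])]
    simp [sub_smul, Finset.sum_sub_distrib, mul_smul, ← Finset.smul_sum, hgv]

theorem coe_conicHull_eq_image (v : ι → E) (t : Finset ι) :
    (conicHull 𝕜 v t : Set E) =
      Fintype.linearCombination 𝕜 (fun i : t => v i) '' {y | ∀ i, 0 ≤ y i} := by
  classical
  ext x
  simp only [SetLike.mem_coe, mem_conicHull, Set.mem_image, Set.mem_ofPred_eq,
    Fintype.linearCombination_apply]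
  constructor
  · rintro ⟨y, hy, rfl⟩
    exact ⟨fun i => y i, fun i => hy i, Finset.sum_coe_sort t fun i => y i • v i⟩
  · rintro ⟨y, hy, rfl⟩
    refine ⟨fun i => if h : i ∈ t then y ⟨i, h⟩ else 0,
      fun i => by dsimp only; split_ifs <;> simp [hy], ?_⟩
    rw [← Finset.sum_coe_sort t]
    simp

/-- Conic Carathéodory theorem. -/
theorem exists_linearIndependent_of_mem_conicHull (hx : x ∈ conicHull 𝕜 v s) :
    ∃ t ⊆ s, LinearIndependent 𝕜 (fun i : t => v i) ∧ x ∈ conicHull 𝕜 v t := by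
  classical
  induction s using Finset.strongInduction with
  | H s ih =>
    by_cases hli : LinearIndependent 𝕜 (fun i : s => v i)
    · exact ⟨s, subset_rfl, hli, hx⟩
    obtain ⟨g, hgv, i₀, hi₀⟩ := Fintype.not_linearIndependent_iff.mp hli
    set G : ι → 𝕜 := fun i => if h : i ∈ s then g ⟨i, h⟩ else 0
    have hGs : ∀ i ∉ s, G i = 0 := fun i hi => dif_neg hi
    have hGv : ∑ i ∈ s, G i • v i = 0 := by
      rw [← hgv, ← Finset.sum_coe_sort s]
      exact Finset.sum_congr rfl fun i _ => by simp [G]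
    have hGi₀ : G i₀ ≠ 0 := by simpa [G] using hi₀
    obtain ⟨i, hi, hxi⟩ : ∃ i ∈ s, x ∈ conicHull 𝕜 v (s.erase i) := by
      rcases hGi₀.lt_or_gt with hneg | hpos
      · exact exists_mem_conicHull_erase hx (g := -G) (by simpa using hGs)
          (by simp [neg_smul, hGv]) (neg_pos.mpr hneg)
      · exact exists_mem_conicHull_erase hx hGs hGv hpos
    obtain ⟨t, hts, htli, hxt⟩ := ih _ (Finset.erase_ssubset hi) hxi
    exact ⟨t, hts.trans (Finset.erase_subset _ _), htli, hxt⟩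

end ConicHull

section Closed

variable {ι E : Type*} [TopologicalSpace E] [AddCommGroup E] [Module ℝ E]
  [IsTopologicalAddGroup E] [ContinuousSMul ℝ E] [T2Space E]

theorem isClosed_conicHull_of_linearIndependent {v : ι → E} {t : Finset ι}
    (hli : LinearIndependent ℝ (fun i : t => v i)) : IsClosed (conicHull ℝ v t : Set E) := by
  rw [coe_conicHull_eq_image]
  refine (LinearMap.isClosedEmbedding_of_injective ?_).isClosedMap _ ?_
  · exact LinearMap.ker_eq_bot.mpr (linearIndependent_iff_injective_fintypeLinearCombination.mp hli)
  · simp only [Set.ofPred_forall]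
    exact isClosed_iInter fun i => isClosed_le continuous_const (continuous_apply i)

theorem isClosed_conicHull (v : ι → E) (s : Finset ι) :
    IsClosed (conicHull ℝ v s : Set E) := by
  classical
  have : (conicHull ℝ v s : Set E) =
      ⋃ t ∈ s.powerset.filter (fun t : Finset ι => LinearIndependent ℝ fun i : t => v i),
        conicHull ℝ v t := by
    ext x
    simp only [SetLike.mem_coe, Set.mem_iUnion, Finset.mem_filter, Finset.mem_powerset,
      exists_prop]
    constructor
    · intro hx
      obtain ⟨t, hts, hli, hxt⟩ := exists_linearIndependent_of_mem_conicHull hx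
      exact ⟨t, ⟨hts, hli⟩, hxt⟩
    · rintro ⟨t, ⟨hts, -⟩, hxt⟩
      exact conicHull_mono hts hxt
  rw [this]
  exact isClosed_biUnion_finset fun t ht => isClosed_conicHull_of_linearIndependent
    (Finset.mem_filter.mp ht).2

end Closed

/-- Farkas' lemma. -/
theorem mem_conicHull_of_forall_dotProduct_nonneg {ι κ : Type*} [Fintype κ]
    {v : ι → κ → ℝ} {s : Finset ι} {c : κ → ℝ}
    (h : ∀ d, (∀ i ∈ s, 0 ≤ v i ⬝ᵥ d) → 0 ≤ c ⬝ᵥ d) : c ∈ conicHull ℝ v s := by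
  classical
  by_contra hc
  obtain ⟨f, hf, hfc⟩ :=
    ProperCone.hyperplane_separation_point ⟨conicHull ℝ v s, isClosed_conicHull v s⟩ hc
  set d : κ → ℝ := fun j => f fun k => if j = k then 1 else 0
  have hfd (w : κ → ℝ) : f w = w ⬝ᵥ d := by
    simpa [dotProduct] using LinearMap.pi_apply_eq_sum_univ f.toLinearMap w
  have := h d fun i hi => by rw [← hfd]; exact hf _ (mem_conicHull_of_mem hi)
  linarith [hfd c]

section LinearProgramming

variable {ι κ : Type*} [Fintype ι] [Fintype κ] {M : Matrix ι κ ℝ} {b : ι → ℝ} {x₀ : κ → ℝ}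

theorem eventually_add_smul_feasible (hx₀ : ∀ i, b i ≤ (M *ᵥ x₀) i) {d : κ → ℝ}
    (hd : ∀ i, (M *ᵥ x₀) i = b i → 0 ≤ (M *ᵥ d) i) :
    ∀ᶠ ε in 𝓝[>] (0 : ℝ), ∀ i, b i ≤ (M *ᵥ (x₀ + ε • d)) i := by
  refine eventually_all.mpr fun i => ?_
  simp only [mulVec_add, mulVec_smul, Pi.add_apply, Pi.smul_apply, smul_eq_mul]
  rcases (hx₀ i).eq_or_lt with htight | hslack
  · filter_upwards [self_mem_nhdsWithin] with ε hε
    nlinarith [hd i htight.symm, Set.mem_Ioi.mp hε]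
  · have hcont : Continuous fun ε : ℝ => (M *ᵥ x₀) i + ε * (M *ᵥ d) i := by fun_prop
    have := hcont.tendsto 0
    simp only [zero_mul, add_zero] at this
    exact (this.eventually (eventually_gt_nhds hslack)).filter_mono nhdsWithin_le_nhds
      |>.mono fun _ h => h.le

/-- Otherwise Farkas' lemma gives a direction that keeps the tight rows feasible and decreases
the objective. -/
theorem mem_conicHull_of_isMinOn {c : κ → ℝ} (hx₀ : ∀ i, b i ≤ (M *ᵥ x₀) i)
    (hmin : IsMinOn (c ⬝ᵥ ·) {x | ∀ i, b i ≤ (M *ᵥ x) i} x₀) :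
    c ∈ conicHull ℝ M (Finset.univ.filter fun i => (M *ᵥ x₀) i = b i) := by
  classical
  refine mem_conicHull_of_forall_dotProduct_nonneg fun d hd => ?_
  by_contra! hneg
  obtain ⟨ε, hfeas, hε⟩ := ((eventually_add_smul_feasible hx₀ fun i hi =>
    hd i (by simpa using hi)).and self_mem_nhdsWithin).exists
  have := hmin hfeas
  simp only [Set.mem_ofPred_eq, dotProduct_add, dotProduct_smul, smul_eq_mul] at this
  nlinarith

theorem dotProduct_eq_of_complementary_slackness {w : ι → ℝ}
    (hslack : ∀ i, w i ≠ 0 → (M *ᵥ x₀) i = b i) : w ⬝ᵥ b = (w ᵥ* M) ⬝ᵥ x₀ := by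
  rw [← dotProduct_mulVec]
  refine Finset.sum_congr rfl fun i _ => ?_
  by_cases hw : w i = 0
  · simp [hw]
  · rw [hslack i hw]

end LinearProgramming

theorem Matrix.exists_mul_eq_one_of_linearIndependent_row {K m n : Type*} [Field K] [Fintype m]
    [Fintype n] [DecidableEq m] {B : Matrix m n K}
    (h : LinearIndependent K B.row) : ∃ L : Matrix n m K, B * L = 1 := by
  classical
  obtain ⟨g, hg⟩ := B.vecMulLinear.exists_leftInverse_of_injective
    (LinearMap.ker_eq_bot.mpr (vecMul_injective_iff.mpr h))
  refine ⟨(LinearMap.toMatrix' g)ᵀ, ?_⟩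
  have := congrArg LinearMap.toMatrix' hg
  rw [LinearMap.toMatrix'_comp, ← transpose_transpose B, vecMulLinear_transpose,
    ← Matrix.toLin'_apply', LinearMap.toMatrix'_toLin', LinearMap.toMatrix'_id] at this
  simpa using congrArg transpose this

theorem linearIndependent_of_ratCast {ι κ : Type*} {v : ι → κ → ℚ}
    (h : LinearIndependent ℝ fun i j => (v i j : ℝ)) : LinearIndependent ℚ v :=
  LinearIndependent.of_comp ((Algebra.linearMap ℚ ℝ).compLeft κ) (h.restrict_scalars' ℚ)

theorem Rat.exists_intCast_eq_mul_of_den_dvd {q : ℚ} {D : ℕ} (h : q.den ∣ D) :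
    ∃ k : ℤ, (k : ℚ) = D * q := by
  obtain ⟨e, rfl⟩ := h
  exact ⟨q.num * e, by push_cast; rw [← Rat.den_mul_eq_num]; ring⟩

theorem vecMul_map_eq_of_mul_eq_one {ι κ R S : Type*} [Fintype ι] [Fintype κ] [DecidableEq ι]
    [CommRing R] [CommRing S] (f : R →+* S) {B : Matrix ι κ R} {L : Matrix κ ι R}
    (hBL : B * L = 1) {z : ι → S} {u : κ → S} (hz : z ᵥ* B.map f = u) : z = u ᵥ* L.map f := by
  rw [← hz, vecMul_vecMul, ← Matrix.map_mul, hBL, Matrix.map_one f f.map_zero f.map_one,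
    vecMul_one]

theorem exists_intCast_eq_mul_vecMul {ι κ : Type*} [Fintype κ] {L : Matrix κ ι ℚ} {D : ℕ}
    (hD : ∀ j i, (L j i).den ∣ D) (c : κ → ℤ) :
    ∃ y : ι → ℤ, ∀ i, (y i : ℝ) = D * ((fun j => (c j : ℝ)) ᵥ* L.map (↑)) i := by
  choose K hK using fun j i => Rat.exists_intCast_eq_mul_of_den_dvd (hD j i)
  refine ⟨fun i => ∑ j, c j * K j i, fun i => ?_⟩
  have hKℝ (j : κ) : (K j i : ℝ) = D * (L j i : ℝ) := by
    exact_mod_cast congrArg (Rat.cast : ℚ → ℝ) (hK j i)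
  simp only [vecMul, dotProduct, Matrix.map_apply, Int.cast_sum, Int.cast_mul, hKℝ,
    Finset.mul_sum]
  exact Finset.sum_congr rfl fun j _ => by ring

theorem vecMul_submatrix_of_forall_notMem_eq_zero {ι κ R : Type*} [Fintype ι] [CommSemiring R]
    (A : Matrix ι κ R) {t : Finset ι} {w : ι → R} (hw : ∀ i ∉ t, w i = 0) :
    (fun i : t => w i) ᵥ* A.submatrix (↑) id = w ᵥ* A := by
  ext j
  simp only [vecMul, dotProduct, submatrix_apply, id]
  rw [Finset.sum_coe_sort t fun i => w i * A i j]
  exact Finset.sum_subset (Finset.subset_univ t) fun i _ hi => by simp [hw i hi]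

def IsBasicDenominator {ι κ : Type*} [Fintype ι] (A : Matrix ι κ ℚ) (D : ℕ) : Prop :=
  ∀ t : Finset ι, LinearIndependent ℝ (fun i : t => A.map ((↑) : ℚ → ℝ) i) →
    ∀ (c : κ → ℤ) (w : ι → ℝ), (∀ i ∉ t, w i = 0) → w ᵥ* A.map (↑) = (fun j => (c j : ℝ)) →
      ∃ y : ι → ℤ, ∀ i, (y i : ℝ) = D * w i

theorem exists_isBasicDenominator {ι κ : Type*} [Fintype ι] [Fintype κ]
    (A : Matrix ι κ ℚ) : ∃ D : ℕ, 0 < D ∧ IsBasicDenominator A D := by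
  classical
  have hL (t : Finset ι) : ∃ L : Matrix κ t ℚ,
      LinearIndependent ℚ (A.submatrix (Subtype.val : t → ι) id).row →
        A.submatrix (Subtype.val : t → ι) id * L = 1 := by
    by_cases h : LinearIndependent ℚ (A.submatrix (Subtype.val : t → ι) id).row
    · obtain ⟨L, hL⟩ := exists_mul_eq_one_of_linearIndependent_row h
      exact ⟨L, fun _ => hL⟩
    · exact ⟨0, fun h' => absurd h' h⟩
  choose L hL using hL
  set D : ℕ := ∏ t, ∏ j, ∏ i, (L t j i).den
  refine ⟨D,
    Finset.prod_pos fun t _ => Finset.prod_pos fun j _ => Finset.prod_pos fun i _ => (L t j i).pos,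
    fun t hli c w hw hwc => ?_⟩
  have hden (j i) : (L t j i).den ∣ D :=
    ((Finset.dvd_prod_of_mem (fun i => (L t j i).den) (Finset.mem_univ i)).trans
      (Finset.dvd_prod_of_mem (fun j => ∏ i, (L t j i).den) (Finset.mem_univ j))).trans
      (Finset.dvd_prod_of_mem (fun t => ∏ j, ∏ i, (L t j i).den) (Finset.mem_univ t))
  have hz := vecMul_map_eq_of_mul_eq_one (Rat.castHom ℝ)
    (hL t (linearIndependent_of_ratCast hli)) (z := fun i : t => w i) (u := fun j => (c j : ℝ)) (by
      rw [← hwc, ← vecMul_submatrix_of_forall_notMem_eq_zero _ hw]; rfl)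
  obtain ⟨y, hy⟩ := exists_intCast_eq_mul_vecMul hden c
  refine ⟨fun i => if h : i ∈ t then y ⟨i, h⟩ else 0, fun i => ?_⟩
  show ((if h : i ∈ t then y ⟨i, h⟩ else 0 : ℤ) : ℝ) = D * w i
  by_cases h : i ∈ t
  · rw [dif_pos h, hy]
    exact congrArg _ (congrFun hz ⟨i, h⟩).symm
  · rw [dif_neg h, hw i h]
    simp

theorem smul_le_sum_smul_mul_iff {ι κ : Type*} [Fintype κ] (A : Matrix ι κ ℚ) (b : ι → ℝ)
    {r : ℚ} (hr : 0 < r) (x : κ → ℝ) :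
    (∀ i, ((r : ℝ) • b) i ≤ ∑ j, ((r • A) i j : ℝ) * x j) ↔
      ∀ i, b i ≤ ∑ j, (A i j : ℝ) * x j := by
  have hrℝ : (0 : ℝ) < r := by exact_mod_cast hr
  refine forall_congr' fun i => ?_
  simp only [Pi.smul_apply, Matrix.smul_apply, smul_eq_mul, Rat.cast_mul, mul_assoc,
    ← Finset.mul_sum]
  exact mul_le_mul_iff_right₀ hrℝ

theorem tdiq_inv_smul_of_isBasicDenominator {m n : ℕ} {A : Matrix (Fin m) (Fin n) ℚ} {D : ℕ}
    (hD : 0 < D) (hA : IsBasicDenominator A D) (b : Fin m → ℝ) :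
    TDIQ ((D : ℚ)⁻¹ • A) ((((D : ℚ)⁻¹ : ℚ) : ℝ) • b) := by
  have hDinv : (0 : ℚ) < (D : ℚ)⁻¹ := by positivity
  rintro c v ⟨⟨x₀, hx₀, rfl⟩, hmin⟩
  rw [smul_le_sum_smul_mul_iff A b hDinv] at hx₀
  have hopt : IsMinOn ((fun j => (c j : ℝ)) ⬝ᵥ ·) {x | ∀ i, b i ≤ (A.map (↑) *ᵥ x) i} x₀ :=
    isMinOn_iff.mpr fun x hx => hmin ⟨x, (smul_le_sum_smul_mul_iff A b hDinv x).mpr hx, rfl⟩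
  obtain ⟨t, hts, hli, z, hz, hzc⟩ :=
    exists_linearIndependent_of_mem_conicHull (mem_conicHull_of_isMinOn hx₀ hopt)
  set w : Fin m → ℝ := fun i => if i ∈ t then z i else 0
  have hwc : w ᵥ* A.map (↑) = fun j => (c j : ℝ) := by
    rw [vecMul_eq_sum, ← hzc]
    simp only [w, ite_smul, zero_smul, Finset.sum_ite_mem, Finset.univ_inter]
  have hslack : ∀ i, w i ≠ 0 → (A.map (↑) *ᵥ x₀) i = b i := by
    intro i hi
    have hit : i ∈ t := by by_contra h; exact hi (if_neg h)
    simpa using hts hit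
  obtain ⟨y, hy⟩ := hA t hli c w (fun i hi => if_neg hi) hwc
  have hyw (i : Fin m) : (y i : ℝ) * (((D : ℚ)⁻¹ : ℚ) : ℝ) = w i := by
    rw [hy]; push_cast; field_simp
  refine ⟨y, fun i => ?_, fun j => ?_, ?_⟩
  · have : (0 : ℝ) ≤ y i := by
      rw [hy]; exact mul_nonneg (Nat.cast_nonneg D) (by simp only [w]; split_ifs <;> simp [hz])
    exact_mod_cast this
  · have : ∑ i, (y i : ℝ) * (((D : ℚ)⁻¹ • A) i j : ℝ) = c j := by
      simp only [Matrix.smul_apply, smul_eq_mul, Rat.cast_mul, ← mul_assoc, hyw]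
      exact congrFun hwc j
    exact_mod_cast this
  · calc ∑ i, (y i : ℝ) * ((((D : ℚ)⁻¹ : ℚ) : ℝ) • b) i = w ⬝ᵥ b := by
          simp only [Pi.smul_apply, smul_eq_mul, ← mul_assoc, hyw]; rfl
      _ = (w ᵥ* A.map (↑)) ⬝ᵥ x₀ := dotProduct_eq_of_complementary_slackness hslack
      _ = _ := by rw [hwc]; rfl

/-- for every rational A there is a nonnegative rational matrix U,
depending only on A, such that for every real b, {x : Ax ≥ b} = {x : (UA)x ≥ Ub}
and the system (UA)x ≥ Ub is totally dual integral. -/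
theorem stmt6 {m n : ℕ} (A : Matrix (Fin m) (Fin n) ℚ) :
    ∃ (q : ℕ) (U : Matrix (Fin q) (Fin m) ℚ), (∀ k i, 0 ≤ U k i) ∧
      ∀ b : Fin m → ℝ,
        ({x : Fin n → ℝ | ∀ i, b i ≤ ∑ j, (A i j : ℝ) * x j} =
          {x : Fin n → ℝ | ∀ k, (∑ i, (U k i : ℝ) * b i) ≤ ∑ j, ((U * A) k j : ℝ) * x j}) ∧
        TDIQ (U * A) (fun k => ∑ i, (U k i : ℝ) * b i) := by
  obtain ⟨D, hD, hA⟩ := exists_isBasicDenominator A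
  have hDinv : (0 : ℚ) < (D : ℚ)⁻¹ := by positivity
  refine ⟨m, (D : ℚ)⁻¹ • 1, fun k i => ?_, fun b => ?_⟩
  · rw [Matrix.smul_apply, one_apply]
    split_ifs <;> simp [hDinv.le]
  have hUb (k : Fin m) : ∑ i, (((D : ℚ)⁻¹ • (1 : Matrix (Fin m) (Fin m) ℚ)) k i : ℝ) * b i =
      (((D : ℚ)⁻¹ : ℚ) : ℝ) • b k := by
    simp [Matrix.smul_apply, one_apply, apply_ite]
  simp only [smul_mul, Matrix.one_mul, hUb]
  exact ⟨Set.ext fun x => (smul_le_sum_smul_mul_iff A b hDinv x).symm,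
    tdiq_inv_smul_of_isBasicDenominator hD hA b⟩
end

section
/- Let C = {(x,z) ∈ ℝⁿ × ℤ^q : f_i(x,z) ≤ b_i, i = 1,…,m} where the f_i are affine Chvátal functions with binary tree representations of total ceiling count c ≥ 1. Then there exists a system P = {(x,z,z̄) ∈ ℝⁿ × ℤ^q × ℤ : f′_i(x,z,z̄) ≤ b′_i} of affine Chvátal inequalities with total ceiling count at most c − 1 such that C = proj_{(x,z)}(P). -/
/-- Binary tree representation of an affine Chvátal function. -/
inductive ACTree (n : ℕ) : Type
  | leaf (a : Fin n → ℚ) (c : ℚ)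
  | ceil (t : ACTree n)
  | scale (α : NNRat) (t : ACTree n)
  | add (α β : NNRat) (t₁ t₂ : ACTree n)

namespace ACTree

/-- The affine Chvátal function represented by a tree. -/
noncomputable def eval {n : ℕ} : ACTree n → (Fin n → ℝ) → ℝ
  | leaf a c, x => (∑ i, (a i : ℝ) * x i) + (c : ℝ)
  | ceil t, x => (⌈t.eval x⌉ : ℝ)
  | scale α t, x => (α : ℝ) * t.eval x
  | add α β t₁ t₂, x => (α : ℝ) * t₁.eval x + (β : ℝ) * t₂.eval x

/-- Ceiling count. -/
def cc {n : ℕ} : ACTree n → ℕ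
  | leaf _ _ => 0
  | ceil t => t.cc + 1
  | scale _ t => t.cc
  | add _ _ t₁ t₂ => t₁.cc + t₂.cc

/-- A tree represents a (homogeneous) Chvátal function if all its leaves are
linear (zero constant term). -/
def IsLinear {n : ℕ} : ACTree n → Prop
  | leaf _ c => c = 0
  | ceil t => t.IsLinear
  | scale _ t => t.IsLinear
  | add _ _ t₁ t₂ => t₁.IsLinear ∧ t₂.IsLinear

end ACTree

/-! Pick an inequality whose tree contains a ceiling and unfold the tree down to an outermost
ceiling: the function becomes `γ * ⌈g₁⌉ + g₂` with `γ ≥ 0` (a product of the weights on the path)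
and one ceiling fewer in `g₁` and `g₂` together. For `γ ≥ 0`, `γ * ⌈g₁⌉ + g₂ ≤ b` holds iff some
integer `z̄` satisfies `g₁ ≤ z̄` and `g₂ + γ * z̄ ≤ b` (take `z̄ = ⌈g₁⌉`; conversely `⌈g₁⌉ ≤ z̄`).
Replacing that inequality by these two, and letting the others ignore `z̄`, gives the system. -/

lemma mul_ceil_add_le_iff_exists_int {γ u v b : ℝ} (hγ : 0 ≤ γ) :
    γ * ⌈u⌉ + v ≤ b ↔ ∃ k : ℤ, u ≤ k ∧ v + γ * k ≤ b := by
  refine ⟨fun h => ⟨⌈u⌉, Int.le_ceil u, by linarith⟩, ?_⟩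
  rintro ⟨k, huk, hk⟩
  have : (⌈u⌉ : ℝ) ≤ k := by exact_mod_cast Int.ceil_le.mpr huk
  nlinarith

namespace ACTree

variable {k : ℕ}

lemma exists_eval_eq_mul_ceil_add (t : ACTree k) (ht : 1 ≤ t.cc) :
    ∃ (γ : ℚ≥0) (g₁ g₂ : ACTree k), g₁.cc + g₂.cc + 1 = t.cc ∧
      ∀ y, t.eval y = γ * ⌈g₁.eval y⌉ + g₂.eval y := by
  induction t with
  | leaf a c => simp [cc] at ht
  | ceil t _ => exact ⟨1, t, leaf 0 0, by simp [cc], fun y => by simp [eval]⟩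
  | scale α t ih =>
    obtain ⟨γ, g₁, g₂, hcc, hev⟩ := ih ht
    refine ⟨α * γ, g₁, scale α g₂, hcc, fun y => ?_⟩
    simp only [eval, hev y]
    push_cast
    ring
  | add α β t₁ t₂ ih₁ ih₂ =>
    by_cases h₁ : 1 ≤ t₁.cc
    · obtain ⟨γ, g₁, g₂, hcc, hev⟩ := ih₁ h₁
      refine ⟨α * γ, g₁, add α β g₂ t₂, by simp only [cc]; omega, fun y => ?_⟩
      simp only [eval, hev y]
      push_cast
      ring
    · obtain ⟨γ, g₁, g₂, hcc, hev⟩ := ih₂ (by simp only [cc] at ht; omega)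
      refine ⟨β * γ, g₁, add α β t₁ g₂, by simp only [cc]; omega, fun y => ?_⟩
      simp only [eval, hev y]
      push_cast
      ring

def extend : ACTree k → ACTree (k + 1)
  | leaf a c => leaf (Fin.append a 0) c
  | ceil t => ceil t.extend
  | scale α t => scale α t.extend
  | add α β t₁ t₂ => add α β t₁.extend t₂.extend

@[simp] lemma cc_extend (t : ACTree k) : t.extend.cc = t.cc := by
  induction t <;> simp [extend, cc, *]

@[simp] lemma eval_extend (t : ACTree k) (y : Fin k → ℝ) (w : Fin 1 → ℝ) :
    t.extend.eval (Fin.append y w) = t.eval y := by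
  induction t <;> simp [extend, eval, Fin.sum_univ_add, *]

def addLastVar (t : ACTree k) (r : ℚ) : ACTree (k + 1) :=
  add 1 1 t.extend (leaf (Fin.append 0 fun _ => r) 0)

@[simp] lemma cc_addLastVar (t : ACTree k) (r : ℚ) : (t.addLastVar r).cc = t.cc := by
  simp [addLastVar, cc]

@[simp] lemma eval_addLastVar (t : ACTree k) (r : ℚ) (y : Fin k → ℝ) (s : ℝ) :
    (t.addLastVar r).eval (Fin.append y fun _ => s) = t.eval y + r * s := by
  simp [addLastVar, eval, Fin.sum_univ_add]

end ACTree

section SplitCeil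

open ACTree

variable {k m : ℕ}

def splitCeilTrees (f : Fin m → ACTree k) (i₀ : Fin m) (γ : ℚ≥0)
    (g₁ g₂ : ACTree k) : Fin (m + 1) → ACTree (k + 1) :=
  Fin.snoc (Function.update (fun i => (f i).addLastVar 0) i₀ (g₁.addLastVar (-1)))
    (g₂.addLastVar γ)

def splitCeilBounds (b : Fin m → ℝ) (i₀ : Fin m) : Fin (m + 1) → ℝ :=
  Fin.snoc (Function.update b i₀ 0) (b i₀)

lemma sum_cc_splitCeilTrees (f : Fin m → ACTree k) (i₀ : Fin m) (γ : ℚ≥0)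
    (g₁ g₂ : ACTree k) :
    ∑ i, (splitCeilTrees f i₀ γ g₁ g₂ i).cc + (f i₀).cc =
      ∑ i, (f i).cc + g₁.cc + g₂.cc := by
  rw [Fin.sum_univ_castSucc]
  simp only [splitCeilTrees, Fin.snoc_castSucc, Fin.snoc_last, Function.apply_update (fun _ => cc),
    cc_addLastVar]
  rw [Finset.sum_update_of_mem (Finset.mem_univ i₀), Finset.sdiff_singleton_eq_erase,
    ← Finset.add_sum_erase _ _ (Finset.mem_univ i₀)]
  ring

lemma forall_eval_le_iff_exists_splitCeil (f : Fin m → ACTree k) (b : Fin m → ℝ) (i₀ : Fin m)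
    (γ : ℚ≥0) (g₁ g₂ : ACTree k) (y : Fin k → ℝ)
    (hf : (f i₀).eval y = γ * ⌈g₁.eval y⌉ + g₂.eval y) :
    (∀ i, (f i).eval y ≤ b i) ↔
      ∃ zb : ℤ, ∀ i, (splitCeilTrees f i₀ γ g₁ g₂ i).eval (Fin.append y fun _ => (zb : ℝ)) ≤
        splitCeilBounds b i₀ i := by
  simp only [Fin.forall_fin_succ', splitCeilTrees, splitCeilBounds, Fin.snoc_castSucc,
    Fin.snoc_last]
  rw [← and_forall_ne i₀]
  simp +contextual only [← and_forall_ne (p := fun i => _ ≤ Function.update b i₀ 0 i) i₀,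
    Function.update_self, ne_eq, not_false_eq_true, Function.update_of_ne, eval_addLastVar,
    Rat.cast_nnratCast, Rat.cast_neg, Rat.cast_one, Rat.cast_zero, zero_mul, add_zero, neg_one_mul,
    ← sub_eq_add_neg, sub_nonpos]
  rw [hf, mul_ceil_add_le_iff_exists_int γ.cast_nonneg]
  exact ⟨fun ⟨⟨zb, h₁, h₂⟩, hP⟩ => ⟨zb, ⟨h₁, hP⟩, h₂⟩, fun ⟨zb, ⟨h₁, hP⟩, h₂⟩ => ⟨⟨zb, h₁, h₂⟩, hP⟩⟩

end SplitCeil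

/-- a system C = {(x,z) ∈ ℝⁿ × ℤ^q : fᵢ(x,z) ≤ bᵢ} of affine Chvátal
inequalities with total ceiling count c ≥ 1 is the projection of a system
P = {(x,z,z̄) ∈ ℝⁿ × ℤ^q × ℤ : f′ᵢ(x,z,z̄) ≤ b′ᵢ} with total ceiling count ≤ c − 1. -/
theorem stmt11 {n q m : ℕ} (f : Fin m → ACTree (n + q)) (b : Fin m → ℝ)
    (hc : 1 ≤ ∑ i, (f i).cc) :
    ∃ (m' : ℕ) (f' : Fin m' → ACTree (n + q + 1)) (b' : Fin m' → ℝ),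
      (∑ i, (f' i).cc) ≤ (∑ i, (f i).cc) - 1 ∧
      ∀ (x : Fin n → ℝ) (z : Fin q → ℤ),
        (∀ i, (f i).eval (Fin.append x fun j => (z j : ℝ)) ≤ b i) ↔
        ∃ zb : ℤ, ∀ i,
          (f' i).eval (Fin.append (Fin.append x fun j => (z j : ℝ))
            fun _ : Fin 1 => (zb : ℝ)) ≤ b' i := by
  obtain ⟨i₀, -, hi₀⟩ := Finset.exists_ne_zero_of_sum_ne_zero (by omega : ∑ i, (f i).cc ≠ 0)
  obtain ⟨γ, g₁, g₂, hcc, hev⟩ := (f i₀).exists_eval_eq_mul_ceil_add (by omega)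
  refine ⟨m + 1, splitCeilTrees f i₀ γ g₁ g₂, splitCeilBounds b i₀, ?_, fun x z => ?_⟩
  · have := sum_cc_splitCeilTrees f i₀ γ g₁ g₂
    omega
  · exact forall_eval_le_iff_exists_splitCeil f b i₀ γ g₁ g₂ _ (hev _)
end

section
/- Let A ∈ ℚ^{m×n} be a rational matrix and let C_P = {u ∈ ℝᵐ : uᵀA = 0, u ≥ 0} be its projection cone, with extreme rays e¹,…,eʳ. Then: (i) the function E(b) = max_k (eᵏ)ᵀb is an LP-consistency tester for A, i.e., for every b ∈ ℝᵐ, {x ∈ ℝⁿ : Ax ≥ b} ≠ ∅ if and only if E(b) ≤ 0; and (ii) for any finite family {vⁱ}_{i∈I} ⊆ ℝᵐ such that V(b) = max_i (vⁱ)ᵀb is an LP-consistency tester for A, the family {vⁱ} contains a positive scalar multiple of each extreme ray eᵏ of C_P. -/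
/-- e is an extreme ray of the cone C: e ∈ C, e ≠ 0, and whenever e = u + v with
u, v ∈ C, both u and v are nonnegative multiples of e. -/
def IsExtremeRay {m : ℕ} (C : Set (Fin m → ℝ)) (e : Fin m → ℝ) : Prop :=
  e ∈ C ∧ e ≠ 0 ∧ ∀ u ∈ C, ∀ v ∈ C, u + v = e → ∃ s : ℝ, 0 ≤ s ∧ u = s • e

/-!
(i) is linear programming duality: by Farkas' lemma, `Ax ≥ b` is feasible iff `uᵀb ≤ 0` for
every `u` in the projection cone `C_P`. As `C_P` is a closed cone inside the nonnegative orthant,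
its slice `{u ∈ C_P | ∑ uᵢ = 1}` is compact and convex, so by Krein–Milman it is the closed convex
hull of its extreme points; these are extreme rays of `C_P`, hence testing the extreme rays
suffices.

(ii) The vectors `vⁱ` of a tester lie in `C_P` (test `b = Ax` and `b = -eⱼ`), and every extreme
ray `eᵏ` lies in the cone they generate, since otherwise Farkas' lemma yields a `b` accepted by `V`
but rejected by `E`. Writing `eᵏ` as a nonnegative combination of the `vⁱ`, extremality forces
some nonzero term to be a multiple of `eᵏ`.
-/

open Matrix Finset

lemma PointedCone.hull_image {R E F : Type*} [Semiring R] [PartialOrder R] [IsOrderedRing R]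
    [AddCommMonoid E] [Module R E] [AddCommMonoid F] [Module R F] (f : E →ₗ[R] F) (s : Set E) :
    hull R (f '' s) = (hull R s).map f := by
  rw [PointedCone.map, Submodule.map_span, LinearMap.coe_restrictScalars]

namespace Matrix

section Farkas

variable {𝕜 ι : Type*} [Field 𝕜] [Fintype ι]

/-- The projection onto the hyperplane `{x | x ⬝ᵥ y = 0}` along `w`. -/
def projAlong (w y : ι → 𝕜) : (ι → 𝕜) →ₗ[𝕜] (ι → 𝕜) where
  toFun x := x - (x ⬝ᵥ y / w ⬝ᵥ y) • w
  map_add' x x' := by simp only [add_dotProduct, add_div, add_smul]; abel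
  map_smul' t x := by
    simp only [smul_dotProduct, smul_eq_mul, mul_div_assoc, mul_smul, smul_sub, RingHom.id_apply]

lemma projAlong_apply (w y x : ι → 𝕜) : projAlong w y x = x - (x ⬝ᵥ y / w ⬝ᵥ y) • w := rfl

lemma projAlong_dotProduct (w y x y' : ι → 𝕜) :
    projAlong w y x ⬝ᵥ y' = x ⬝ᵥ (y' - (w ⬝ᵥ y' / w ⬝ᵥ y) • y) := by
  simp only [projAlong_apply, sub_dotProduct, dotProduct_sub, smul_dotProduct, dotProduct_smul,
    smul_eq_mul]
  ring

lemma projAlong_self {w y : ι → 𝕜} (hwy : w ⬝ᵥ y ≠ 0) : projAlong w y w = 0 := by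
  rw [projAlong_apply, div_self hwy, one_smul, sub_self]

lemma eq_add_smul_of_projAlong_eq {w y c z : ι → 𝕜} (h : projAlong w y c = projAlong w y z) :
    c = ((c ⬝ᵥ y - z ⬝ᵥ y) / w ⬝ᵥ y) • w + z := by
  rw [projAlong_apply, projAlong_apply] at h
  linear_combination (norm := module) h

variable [LinearOrder 𝕜] [IsStrictOrderedRing 𝕜]

lemma dotProduct_nonpos_of_mem_hull {S : Set (ι → 𝕜)} {y z : ι → 𝕜}
    (hS : ∀ a ∈ S, a ⬝ᵥ y ≤ 0) (hz : z ∈ PointedCone.hull 𝕜 S) : z ⬝ᵥ y ≤ 0 := by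
  induction hz using Submodule.span_induction with
  | mem a ha => exact hS a ha
  | zero => simp
  | add z z' _ _ hz hz' => rw [add_dotProduct]; exact add_nonpos hz hz'
  | smul t z _ hz =>
    rw [Nonneg.mk_smul]
    exact (smul_dotProduct (t : 𝕜) z y).trans_le (mul_nonpos_of_nonneg_of_nonpos t.2 hz)

theorem exists_dotProduct_pos_of_notMem_hull {κ : Type*} (T : Finset κ) (a : κ → ι → 𝕜)
    {c : ι → 𝕜} (hc : c ∉ PointedCone.hull 𝕜 (a '' T)) :
    ∃ y, (∀ k ∈ T, a k ⬝ᵥ y ≤ 0) ∧ 0 < c ⬝ᵥ y := by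
  classical
  induction T using Finset.induction_on generalizing a c with
  | empty =>
    have hc0 : c ≠ 0 := by rintro rfl; exact hc (zero_mem _)
    exact ⟨c, by simp, lt_of_le_of_ne (Finset.sum_nonneg fun i _ => mul_self_nonneg (c i))
      (Ne.symm (dotProduct_self_eq_zero.not.mpr hc0))⟩
  | insert k T _ ih =>
    rw [Finset.coe_insert, Set.image_insert_eq] at hc
    obtain ⟨y, hTy, hcy⟩ := ih a fun h => hc (Submodule.span_mono (Set.subset_insert _ _) h)
    set w := a k
    rcases le_or_gt (w ⬝ᵥ y) 0 with hwy | hwy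
    · exact ⟨y, Finset.forall_mem_insert _ _ _ |>.mpr ⟨hwy, hTy⟩, hcy⟩
    -- The new generator `w` violates `y`: project along `w` onto `y`'s kernel and recurse. A
    -- separator `y'` of the projected data lifts, because `x ⬝ᵥ y'' = projAlong w y x ⬝ᵥ y'`.
    set P := projAlong w y
    have hPc : P c ∉ PointedCone.hull 𝕜 ((P ∘ a) '' T) := by
      rintro hPc
      rw [Set.image_comp, PointedCone.hull_image] at hPc
      obtain ⟨z, hz, hPz⟩ := hPc
      have hzy : z ⬝ᵥ y ≤ 0 := dotProduct_nonpos_of_mem_hull (by simpa using hTy) hz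
      have hcoef : 0 ≤ (c ⬝ᵥ y - z ⬝ᵥ y) / w ⬝ᵥ y := div_nonneg (by linarith) hwy.le
      exact hc (Submodule.mem_span_insert.mpr
        ⟨⟨_, hcoef⟩, z, hz, eq_add_smul_of_projAlong_eq hPz.symm⟩)
    obtain ⟨y', hTy', hcy'⟩ := ih (P ∘ a) hPc
    refine ⟨y' - (w ⬝ᵥ y' / w ⬝ᵥ y) • y, ?_, by rwa [← projAlong_dotProduct]⟩
    rw [Finset.forall_mem_insert]
    refine ⟨?_, fun j hj => ?_⟩ <;> rw [← projAlong_dotProduct]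
    · rw [projAlong_self hwy.ne', zero_dotProduct]
    · exact hTy' j hj

theorem exists_dotProduct_pos_of_notMem_hull_range {κ : Type*} [Fintype κ] (a : κ → ι → 𝕜)
    {c : ι → 𝕜} (hc : c ∉ PointedCone.hull 𝕜 (Set.range a)) :
    ∃ y, (∀ k, a k ⬝ᵥ y ≤ 0) ∧ 0 < c ⬝ᵥ y := by
  obtain ⟨y, hay, hcy⟩ := exists_dotProduct_pos_of_notMem_hull Finset.univ a (by simpa using hc)
  exact ⟨y, fun k => hay k (Finset.mem_univ k), hcy⟩

end Farkas

section LP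

variable {𝕜 m n : Type*} [Field 𝕜] [LinearOrder 𝕜] [IsStrictOrderedRing 𝕜]

section

variable [Fintype n]

def feasibleCone (A : Matrix m n 𝕜) : PointedCone 𝕜 (m → 𝕜) where
  carrier := {b | ∃ x, b ≤ A *ᵥ x}
  zero_mem' := ⟨0, by rw [mulVec_zero]⟩
  add_mem' := fun ⟨x, hx⟩ ⟨x', hx'⟩ => ⟨x + x', by rw [mulVec_add]; exact add_le_add hx hx'⟩
  smul_mem' t _ := fun ⟨x, hx⟩ =>
    ⟨(t : 𝕜) • x, by
      rw [mulVec_smul, ← Nonneg.coe_smul]; exact smul_le_smul_of_nonneg_left hx t.2⟩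

variable {A : Matrix m n 𝕜}

lemma mulVec_mem_feasibleCone (x : n → 𝕜) : A *ᵥ x ∈ feasibleCone A := ⟨x, le_rfl⟩

lemma neg_single_one_mem_feasibleCone [DecidableEq m] (i : m) :
    -Pi.single i 1 ∈ feasibleCone A :=
  ⟨0, by rw [mulVec_zero, neg_nonpos]; exact Pi.single_nonneg.mpr zero_le_one⟩

end

section

variable [Fintype m]

def projectionCone (A : Matrix m n 𝕜) : PointedCone 𝕜 (m → 𝕜) :=
  PointedCone.positive 𝕜 (m → 𝕜) ⊓ .ofSubmodule (LinearMap.ker A.vecMulLinear)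

lemma mem_projectionCone {A : Matrix m n 𝕜} {u : m → 𝕜} :
    u ∈ projectionCone A ↔ u ᵥ* A = 0 ∧ 0 ≤ u := by
  rw [projectionCone, Submodule.mem_inf, PointedCone.mem_positive, and_comm]
  rfl

lemma isClosed_projectionCone (A : Matrix m n ℝ) :
    IsClosed (projectionCone A : Set (m → ℝ)) := by
  have : (projectionCone A : Set (m → ℝ)) = {u | u ᵥ* A = 0} ∩ Set.Ici 0 := by
    ext u; exact mem_projectionCone
  rw [this]
  exact (isClosed_eq (by fun_prop) continuous_const).inter isClosed_Ici

end

variable [Fintype m] [Fintype n] {A : Matrix m n 𝕜}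

lemma dotProduct_nonpos_of_mem_feasibleCone {u b : m → 𝕜} (hu : u ∈ projectionCone A)
    (hb : b ∈ feasibleCone A) : u ⬝ᵥ b ≤ 0 := by
  obtain ⟨huA, hu0⟩ := mem_projectionCone.mp hu
  obtain ⟨x, hx⟩ := hb
  calc u ⬝ᵥ b ≤ u ⬝ᵥ (A *ᵥ x) := dotProduct_le_dotProduct_of_nonneg_left hx hu0
    _ = 0 := by rw [dotProduct_mulVec, huA, zero_dotProduct]

lemma mem_projectionCone_iff {u : m → 𝕜} :
    u ∈ projectionCone A ↔ ∀ b ∈ feasibleCone A, u ⬝ᵥ b ≤ 0 := by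
  classical
  refine ⟨fun hu b => dotProduct_nonpos_of_mem_feasibleCone hu, fun h => ?_⟩
  refine mem_projectionCone.mpr ⟨?_, fun i => ?_⟩
  · have := h _ (mulVec_mem_feasibleCone (u ᵥ* A))
    rw [dotProduct_mulVec] at this
    exact dotProduct_self_eq_zero.mp
      (this.antisymm (Finset.sum_nonneg fun i _ => mul_self_nonneg _))
  · simpa using h _ (neg_single_one_mem_feasibleCone i)

theorem mem_feasibleCone_iff {b : m → 𝕜} :
    b ∈ feasibleCone A ↔ ∀ u ∈ projectionCone A, u ⬝ᵥ b ≤ 0 := by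
  classical
  refine ⟨fun hb u hu => dotProduct_nonpos_of_mem_feasibleCone hu hb, fun h => ?_⟩
  by_contra hb
  let g : n ⊕ n ⊕ m → m → 𝕜 :=
    Sum.elim (fun j => A *ᵥ Pi.single j 1) (Sum.elim (fun j => A *ᵥ -Pi.single j 1)
      fun i => -Pi.single i 1)
  have hg : PointedCone.hull 𝕜 (Set.range g) ≤ feasibleCone A := by
    refine Submodule.span_le.mpr ?_
    rintro _ ⟨j | j | i, rfl⟩
    · exact mulVec_mem_feasibleCone _
    · exact mulVec_mem_feasibleCone _
    · exact neg_single_one_mem_feasibleCone i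
  obtain ⟨u, hgu, hbu⟩ := exists_dotProduct_pos_of_notMem_hull_range g fun h => hb (hg h)
  have hu : u ∈ projectionCone A := by
    refine mem_projectionCone.mpr ⟨funext fun j => ?_, fun i => ?_⟩
    · have h₁ := hgu (.inl j)
      have h₂ := hgu (.inr (.inl j))
      simp only [g, Sum.elim_inl, Sum.elim_inr, mulVec_neg, dotProduct_comm _ u, dotProduct_neg,
        dotProduct_mulVec, dotProduct_single_one, neg_nonpos] at h₁ h₂
      exact h₁.antisymm h₂
    · simpa [g] using hgu (.inr (.inr i))
  exact (h u hu).not_gt (by rwa [dotProduct_comm])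

end LP

end Matrix

section ExtremeRay

variable {m : ℕ} {C : PointedCone ℝ (Fin m → ℝ)}

lemma smul_inv_sum_mem_slice {u : Fin m → ℝ} (hu : u ∈ C) (hsum : 0 < ∑ i, u i) :
    (∑ i, u i)⁻¹ • u ∈ (C : Set (Fin m → ℝ)) ∩ {x | ∑ i, x i = 1} :=
  ⟨C.smul_mem (inv_nonneg.mpr hsum.le) hu, by simp [← Finset.mul_sum, hsum.ne']⟩

lemma isExtremeRay_of_mem_extremePoints_slice (hC : ∀ u ∈ C, 0 ≤ u) {x : Fin m → ℝ}
    (hx : x ∈ ((C : Set (Fin m → ℝ)) ∩ {x | ∑ i, x i = 1}).extremePoints ℝ) :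
    IsExtremeRay C x := by
  obtain ⟨⟨hxC, hx1⟩, hext⟩ := hx
  refine ⟨hxC, by rintro rfl; simp at hx1, fun p hp q hq hpq =>
    ⟨∑ i, p i, sum_nonneg fun i _ => hC p hp i, ?_⟩⟩
  have hsum : ∑ i, p i + ∑ i, q i = 1 := by
    rw [← hx1, ← hpq]; simp [Finset.sum_add_distrib]
  rcases (sum_nonneg fun i _ => hC p hp i).eq_or_lt with hp0 | hp0
  · rw [← hp0, zero_smul]
    exact (Fintype.sum_eq_zero_iff_of_nonneg (hC p hp)).mp hp0.symm
  rcases (sum_nonneg fun i _ => hC q hq i).eq_or_lt with hq0 | hq0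
  · rw [← hq0, add_zero] at hsum
    rw [hsum, one_smul, ← hpq, (Fintype.sum_eq_zero_iff_of_nonneg (hC q hq)).mp hq0.symm, add_zero]
  have hseg : x ∈ openSegment ℝ ((∑ i, p i)⁻¹ • p) ((∑ i, q i)⁻¹ • q) :=
    ⟨_, _, hp0, hq0, hsum, by simp [smul_smul, hp0.ne', hq0.ne', hpq]⟩
  rw [← hext (smul_inv_sum_mem_slice hp hp0) (smul_inv_sum_mem_slice hq hq0) hseg, smul_smul,
    mul_inv_cancel₀ hp0.ne', one_smul]

theorem dotProduct_nonpos_of_forall_isExtremeRay (hC : ∀ u ∈ C, 0 ≤ u)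
    (hCc : IsClosed (C : Set (Fin m → ℝ))) {b : Fin m → ℝ}
    (hb : ∀ e, IsExtremeRay C e → e ⬝ᵥ b ≤ 0) {u : Fin m → ℝ} (hu : u ∈ C) : u ⬝ᵥ b ≤ 0 := by
  set K := (C : Set (Fin m → ℝ)) ∩ {x | ∑ i, x i = 1}
  have hKcompact : IsCompact K := by
    refine (isCompact_Icc (a := 0) (b := 1)).of_isClosed_subset
      (hCc.inter (isClosed_eq (continuous_finsetSum _ fun i _ => continuous_apply i)
        continuous_const)) fun x hx => ⟨hC x hx.1, fun i => ?_⟩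
    calc x i ≤ ∑ j, x j := single_le_sum (fun j _ => hC x hx.1 j) (mem_univ i)
      _ = 1 := hx.2
  have hKconvex : Convex ℝ K := C.convex.inter <|
    convex_hyperplane ⟨fun x y => sum_add_distrib, fun c x => by simp [mul_sum]⟩ 1
  have hKb : K ⊆ {x | x ⬝ᵥ b ≤ 0} := by
    rw [← closure_convexHull_extremePoints hKcompact hKconvex]
    refine closure_minimal (convexHull_min (fun x hx => ?_) ?_) ?_
    · exact hb x (isExtremeRay_of_mem_extremePoints_slice hC hx)
    · exact convex_halfSpace_le
        ⟨fun x y => add_dotProduct x y b, fun c x => smul_dotProduct c x b⟩ 0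
    · exact isClosed_le (by fun_prop) continuous_const
  rcases eq_or_ne u 0 with rfl | hu0
  · simp
  have hsum : 0 < ∑ i, u i := Fintype.sum_pos (lt_of_le_of_ne (hC u hu) (Ne.symm hu0))
  have := hKb (smul_inv_sum_mem_slice hu hsum)
  rw [Set.mem_ofPred_eq, smul_dotProduct, smul_eq_mul] at this
  exact nonpos_of_mul_nonpos_right this (inv_pos.mpr hsum)

theorem exists_smul_eq_of_isExtremeRay_mem_hull {κ : Type*} {e : Fin m → ℝ}
    (he : IsExtremeRay C e) (T : Finset κ) {v : κ → Fin m → ℝ} (hv : ∀ k ∈ T, v k ∈ C)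
    (heT : e ∈ PointedCone.hull ℝ (v '' T)) : ∃ k ∈ T, ∃ c : ℝ, 0 < c ∧ v k = c • e := by
  classical
  induction T using Finset.induction_on with
  | empty => simp_all [IsExtremeRay]
  | insert k T _ ih =>
    rw [Finset.forall_mem_insert] at hv
    rw [Finset.coe_insert, Set.image_insert_eq] at heT
    obtain ⟨a, z, hz, hea⟩ := Submodule.mem_span_insert.mp heT
    by_cases hak : a • v k = 0
    · obtain ⟨j, hj, hvj⟩ := ih hv.2 (by rwa [hea, hak, zero_add])
      exact ⟨j, mem_insert_of_mem hj, hvj⟩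
    have hzC : z ∈ C := Submodule.span_le.mpr (by rintro _ ⟨j, hj, rfl⟩; exact hv.2 j hj) hz
    obtain ⟨s, hs, hsa⟩ := he.2.2 _ (C.smul_mem a.2 hv.1) _ hzC hea.symm
    rw [← Nonneg.coe_smul] at hak
    have ha0 : (a : ℝ) ≠ 0 := by rintro h; exact hak (by rw [h, zero_smul])
    have hs0 : s ≠ 0 := by rintro rfl; exact hak (by rw [hsa, zero_smul])
    refine ⟨k, mem_insert_self k T, s / a, div_pos (hs.lt_of_ne' hs0) (a.2.lt_of_ne' ha0), ?_⟩
    rw [div_eq_inv_mul, mul_smul, ← hsa, smul_smul, inv_mul_cancel₀ ha0, one_smul]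

end ExtremeRay

/-- let C_P = {u : uᵀA = 0, u ≥ 0} be the projection cone of a rational
matrix A, with (complete set of) extreme rays e¹,…,eʳ. Then (i) E(b) = max_k (eᵏ)ᵀb
is an LP-consistency tester for A, and (ii) every finite family {vⁱ} giving an
LP-consistency tester V(b) = max_i (vⁱ)ᵀb contains a positive multiple of each eᵏ. -/
theorem stmt15 {m n : ℕ} (A : Matrix (Fin m) (Fin n) ℚ)
    (CP : Set (Fin m → ℝ))
    (hCP : CP = {u | (∀ j, ∑ i, u i * (A i j : ℝ) = 0) ∧ ∀ i, 0 ≤ u i})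
    (r : ℕ) (e : Fin r → Fin m → ℝ)
    (hext : ∀ k, IsExtremeRay CP (e k))
    (hall : ∀ u, IsExtremeRay CP u → ∃ (k : Fin r) (s : ℝ), 0 < s ∧ u = s • e k) :
    (∀ b : Fin m → ℝ,
        (∃ x : Fin n → ℝ, ∀ i, b i ≤ ∑ j, (A i j : ℝ) * x j) ↔
          ∀ k, ∑ i, e k i * b i ≤ 0) ∧
    (∀ (s : ℕ) (v : Fin s → Fin m → ℝ),
        (∀ b : Fin m → ℝ,
          (∃ x : Fin n → ℝ, ∀ i, b i ≤ ∑ j, (A i j : ℝ) * x j) ↔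
            ∀ i, ∑ j, v i j * b j ≤ 0) →
        ∀ k, ∃ (i : Fin s) (c : ℝ), 0 < c ∧ v i = c • e k) := by
  set Ar : Matrix (Fin m) (Fin n) ℝ := A.map (↑)
  have hCP' : CP = projectionCone Ar := by
    ext u
    simp [hCP, mem_projectionCone, funext_iff, vecMul, dotProduct, Pi.le_def, Ar]
  subst hCP'
  have hC : ∀ u ∈ projectionCone Ar, 0 ≤ u := fun u hu => (mem_projectionCone.mp hu).2
  refine ⟨fun b => ?_, fun s v htest k => ?_⟩
  · change b ∈ feasibleCone Ar ↔ ∀ k, e k ⬝ᵥ b ≤ 0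
    rw [mem_feasibleCone_iff]
    refine ⟨fun h k => h _ (hext k).1, fun h u hu => ?_⟩
    refine dotProduct_nonpos_of_forall_isExtremeRay hC (isClosed_projectionCone Ar)
      (fun e' he' => ?_) hu
    obtain ⟨k, t, ht, rfl⟩ := hall e' he'
    rw [smul_dotProduct, smul_eq_mul]
    exact mul_nonpos_of_nonneg_of_nonpos ht.le (h k)
  · have hv : ∀ i ∈ univ, v i ∈ projectionCone Ar :=
      fun i _ => mem_projectionCone_iff.mpr fun b hb => (htest b).mp hb i
    have hek : e k ∈ PointedCone.hull ℝ (Set.range v) := by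
      by_contra h
      obtain ⟨b, hvb, hkb⟩ := exists_dotProduct_pos_of_notMem_hull_range v h
      exact hkb.not_ge (dotProduct_nonpos_of_mem_feasibleCone (hext k).1 ((htest b).mpr hvb))
    obtain ⟨i, -, c, hc, hvi⟩ :=
      exists_smul_eq_of_isExtremeRay_mem_hull (hext k) univ hv (by simpa using hek)
    exact ⟨i, c, hc, hvi⟩
end
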